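/- arXiv:2306.04547 — 13 statements merged into one kernel-verified Lean document; each statement's English description precedes it below -/
import Mathlib

section
/- If f = a_1x_1 + ⋯ + a_dx_d is a linear form in ℂ[x_1,…,x_d], then for every n ≥ d+1 the polynomial f^{(n)}(x) := f(x_1^n,…,x_d^n) lies in the ideal generated by f^{(n-d)},…,f^{(n-1)}; consequently f^{(n)} ∈ (f, f^{(2)},…, f^{(d)}) for all n ≥ 1. -/
/-!
Each variable `x_j` is a root of `∏_k (T - x_k) = ∑_i (-1)^i e_i T^(d-i)`, so for `n ≥ d` its powers
satisfy the linear recurrence `x_j^n = -∑_{i=1}^d (-1)^i e_i x_j^(n-i)` with coefficients `e_i`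
independent of `j`. Summing against the coefficients of `f` gives the same recurrence for
`f^{(n)}`, which is the first claim; the second follows by strong induction on `n`.
-/

open MvPolynomial

/-- The substitution `x_j ↦ x_j^i`. -/
noncomputable def pw (d i : ℕ) (f : MvPolynomial (Fin d) ℂ) : MvPolynomial (Fin d) ℂ :=
  aeval (fun j => X j ^ i) f

open Finset

theorem Submodule.mem_span_image_Icc_one_of_mem_span_image_Icc_sub {R M : Type*} [Semiring R]
    [AddCommMonoid M] [Module R M] {g : ℕ → M} {d : ℕ}
    (hg : ∀ n, d + 1 ≤ n → g n ∈ span R (g '' Set.Icc (n - d) (n - 1))) :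
    ∀ n, 1 ≤ n → g n ∈ span R (g '' Set.Icc 1 d) := by
  intro n
  induction n using Nat.strong_induction_on with
  | _ n ih =>
    intro hn
    by_cases hnd : n ≤ d
    · exact subset_span ⟨n, ⟨hn, hnd⟩, rfl⟩
    · refine span_le.mpr ?_ (hg n (by omega))
      rintro _ ⟨k, ⟨hk, hk'⟩, rfl⟩
      exact ih k (by omega) (by omega)

namespace MvPolynomial

variable {σ R : Type*} [Fintype σ] [CommRing R]

theorem sum_neg_one_pow_mul_esymm_mul_X_pow_eq_zero (j : σ) :
    ∑ i ∈ range (Fintype.card σ + 1),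
      (-1) ^ i * (esymm σ R i * X j ^ (Fintype.card σ - i)) = 0 := by
  have vieta := congrArg (Polynomial.eval (X j : MvPolynomial σ R))
    (Multiset.prod_X_sub_X_eq_sum_esymm (univ.val.map fun i : σ => (X i : MvPolynomial σ R)))
  simp only [Multiset.map_map, Function.comp_def, Multiset.card_map, card_val, card_univ,
    Polynomial.eval_multiset_prod, Polynomial.eval_sub, Polynomial.eval_X, Polynomial.eval_C,
    Polynomial.eval_finsetSum, Polynomial.eval_mul, Polynomial.eval_pow, Polynomial.eval_neg,
    Polynomial.eval_one, ← esymm_eq_multiset_esymm] at vieta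
  rw [← vieta]
  exact Multiset.prod_eq_zero (Multiset.mem_map.mpr ⟨j, mem_univ_val j, sub_self _⟩)

theorem X_pow_eq_sum_esymm_mul_X_pow (j : σ) {n : ℕ} (hn : Fintype.card σ ≤ n) :
    X j ^ n = -∑ i ∈ range (Fintype.card σ),
      (-1) ^ (i + 1) * esymm σ R (i + 1) * X j ^ (n - (i + 1)) := by
  have h := congrArg (X j ^ (n - Fintype.card σ) * ·)
    (sum_neg_one_pow_mul_esymm_mul_X_pow_eq_zero (R := R) j)
  simp only [mul_zero, sum_range_succ', pow_zero, esymm_zero, one_mul, Nat.sub_zero] at h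
  rw [eq_neg_iff_add_eq_zero, add_comm, ← h, mul_add, mul_sum, ← pow_add, Nat.sub_add_cancel hn]
  refine congrArg (· + _) (sum_congr rfl fun i hi => ?_)
  have hi : i + 1 ≤ Fintype.card σ := mem_range.mp hi
  rw [mul_left_comm, mul_left_comm (X j ^ _), ← pow_add, mul_assoc]
  congr 3
  omega

end MvPolynomial

theorem pw_sum_C_mul_X (d m : ℕ) (a : Fin d → ℂ) :
    pw d m (∑ j, C (a j) * X j) = ∑ j, C (a j) * X j ^ m := by
  simp [pw, algebraMap_eq]

theorem pw_sum_C_mul_X_eq_sum_esymm_mul_pw {d n : ℕ} (hn : d ≤ n) (a : Fin d → ℂ) :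
    pw d n (∑ j, C (a j) * X j) = -∑ i ∈ range d,
      (-1) ^ (i + 1) * esymm (Fin d) ℂ (i + 1) * pw d (n - (i + 1)) (∑ j, C (a j) * X j) := by
  have hn' : Fintype.card (Fin d) ≤ n := by simpa using hn
  simp only [pw_sum_C_mul_X, X_pow_eq_sum_esymm_mul_X_pow _ hn', Fintype.card_fin, mul_neg,
    sum_neg_distrib, mul_sum]
  rw [sum_comm]
  refine congrArg _ (sum_congr rfl fun i _ => sum_congr rfl fun j _ => ?_)
  ring

theorem pw_mem_span_pw_Icc_sub {d n : ℕ} (hn : d + 1 ≤ n) (a : Fin d → ℂ)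
    {f : MvPolynomial (Fin d) ℂ} (hf : f = ∑ j, C (a j) * X j) :
    pw d n f ∈ Ideal.span ((fun k => pw d k f) '' Set.Icc (n - d) (n - 1)) := by
  subst hf
  rw [pw_sum_C_mul_X_eq_sum_esymm_mul_pw (by omega)]
  refine neg_mem (sum_mem fun i hi => Ideal.mul_mem_left _ _ (Ideal.subset_span ?_))
  have hi : i < d := mem_range.mp hi
  exact ⟨n - (i + 1), ⟨by omega, by omega⟩, rfl⟩

theorem stmt1_general (d : ℕ) (a : Fin d → ℂ)
    (f : MvPolynomial (Fin d) ℂ) (hf : f = ∑ j, C (a j) * X j) :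
    (∀ n : ℕ, d + 1 ≤ n →
      pw d n f ∈ Ideal.span ((fun k => pw d k f) '' Set.Icc (n - d) (n - 1))) ∧
    (∀ n : ℕ, 1 ≤ n →
      pw d n f ∈ Ideal.span ((fun k => pw d k f) '' Set.Icc 1 d)) := by
  have recurrence : ∀ n : ℕ, d + 1 ≤ n →
      pw d n f ∈ Ideal.span ((fun k => pw d k f) '' Set.Icc (n - d) (n - 1)) :=
    fun n hn => pw_mem_span_pw_Icc_sub hn a hf
  exact ⟨recurrence, Submodule.mem_span_image_Icc_one_of_mem_span_image_Icc_sub recurrence⟩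

theorem stmt1 (d : ℕ) (hd : 0 < d) (a : Fin d → ℂ)
    (f : MvPolynomial (Fin d) ℂ) (hf : f = ∑ j, C (a j) * X j) :
    (∀ n : ℕ, d + 1 ≤ n →
      pw d n f ∈ Ideal.span ((fun k => pw d k f) '' Set.Icc (n - d) (n - 1))) ∧
    (∀ n : ℕ, 1 ≤ n →
      pw d n f ∈ Ideal.span ((fun k => pw d k f) '' Set.Icc 1 d)) :=
  stmt1_general d a f hf
end

section
/- In ℂ[x,y], let α ∈ ℂ be nonzero and not a root of unity, and let I^{(*)} = (y − αx, y² − αx²). Then I^{(*)} = (y − αx, x²), and I^{(*)} cannot be generated by finitely many polynomials each of which is a product of monomials and binomials (differences of two monomials). -/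
open MvPolynomial

/-- A monomial in `ℂ[x,y]` (with `x = X 0`, `y = X 1`). -/
def IsMonomial (p : MvPolynomial (Fin 2) ℂ) : Prop :=
  ∃ a b : ℕ, p = X 0 ^ a * X 1 ^ b

/-- A binomial: a difference of two monomials. -/
def IsBinomial (p : MvPolynomial (Fin 2) ℂ) : Prop :=
  ∃ a b c d : ℕ, p = X 0 ^ a * X 1 ^ b - X 0 ^ c * X 1 ^ d

/-- A product of monomials and binomials. -/
def IsProdMonBin (p : MvPolynomial (Fin 2) ℂ) : Prop :=
  ∃ m : Multiset (MvPolynomial (Fin 2) ℂ),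
    (∀ q ∈ m, IsMonomial q ∨ IsBinomial q) ∧ p = m.prod

open TrivSqZeroExt

noncomputable abbrev AA := TrivSqZeroExt ℂ (ℂ × ℂ)

noncomputable def Phi : MvPolynomial (Fin 2) ℂ →ₐ[ℂ] AA :=
  aeval ![inr (1,0), inr (0,1)]

@[simp] lemma Phi_X0 : Phi (X 0) = inr (1,0) := by simp [Phi]
@[simp] lemma Phi_X1 : Phi (X 1) = inr (0,1) := by simp [Phi]

lemma snd_mul' (a b : AA) : (a*b).snd = a.fst • b.snd + b.fst • a.snd := by
  rw [snd_mul]; simp [MulOpposite.smul_eq_mul_unop]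

def Good (z : AA) : Prop := z.fst = 0 → z.snd.1 = 0 ∨ z.snd.2 = 0 ∨ z.snd.1 + z.snd.2 = 0

lemma good_one : Good 1 := by intro h; simp at h

lemma good_mul {a b : AA} (ha : Good a) (hb : Good b) : Good (a*b) := by
  intro h
  rw [fst_mul] at h
  rw [snd_mul']
  rcases mul_eq_zero.1 h with h0 | h0
  · rcases eq_or_ne b.fst 0 with h1 | h1
    · simp [h0, h1]
    · rcases ha h0 with hc | hc | hc <;>
        simp [h0, smul_eq_mul, hc, ← mul_add] <;> right <;> right <;>
        rw [← mul_add, hc, mul_zero]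
  · rcases eq_or_ne a.fst 0 with h1 | h1
    · simp [h0, h1]
    · rcases hb h0 with hc | hc | hc <;>
        simp [h0, smul_eq_mul, hc] <;> right <;> right <;>
        rw [← mul_add, hc, mul_zero]

lemma inr_sq (m : ℂ × ℂ) : (inr m : AA) ^ 2 = 0 := by
  rw [sq, inr_mul_inr]

lemma inr_pow (m : ℂ × ℂ) (n : ℕ) : (inr m : AA) ^ (n+2) = 0 := by
  rw [pow_add, inr_sq, mul_zero]

lemma Phi_mono (a b : ℕ) :
    Phi (X 0 ^ a * X 1 ^ b) = 1 ∨ Phi (X 0 ^ a * X 1 ^ b) = inr (1,0) ∨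
    Phi (X 0 ^ a * X 1 ^ b) = inr (0,1) ∨ Phi (X 0 ^ a * X 1 ^ b) = 0 := by
  rw [map_mul, map_pow, map_pow, Phi_X0, Phi_X1]
  match a, b with
  | 0, 0 => simp
  | 0, 1 => simp
  | 1, 0 => simp
  | 1, 1 => right; right; right; simp [inr_mul_inr]
  | (n+2), b => right; right; right; rw [inr_pow, zero_mul]
  | a, (n+2) => right; right; right; rw [inr_pow, mul_zero]

lemma good_of_set {u : AA} (h : u = 1 ∨ u = inr (1,0) ∨ u = inr (0,1) ∨ u = 0) : Good u := by
  rcases h with h | h | h | h <;> subst h <;> intro hf <;> simp at hf ⊢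

lemma good_sub_of_set {u v : AA}
    (hu : u = 1 ∨ u = inr (1,0) ∨ u = inr (0,1) ∨ u = 0)
    (hv : v = 1 ∨ v = inr (1,0) ∨ v = inr (0,1) ∨ v = 0) : Good (u - v) := by
  rcases hu with h | h | h | h <;> rcases hv with h' | h' | h' | h' <;> subst h <;> subst h' <;>
    intro hf <;> simp at hf ⊢ <;> norm_num

lemma good_phi {g : MvPolynomial (Fin 2) ℂ} (hg : IsProdMonBin g) : Good (Phi g) := by
  obtain ⟨m, hm, rfl⟩ := hg
  rw [map_multiset_prod]
  refine Multiset.prod_induction _ _ (fun a b => good_mul) good_one ?_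
  intro z hz
  obtain ⟨q, hq, rfl⟩ := Multiset.mem_map.1 hz
  rcases hm q hq with ⟨a, b, rfl⟩ | ⟨a, b, c, d, rfl⟩
  · exact good_of_set (Phi_mono a b)
  · rw [map_sub]; exact good_sub_of_set (Phi_mono a b) (Phi_mono c d)

theorem stmt7 (α : ℂ) (hα0 : α ≠ 0) (hαru : ∀ n : ℕ, 0 < n → α ^ n ≠ 1)
    (I : Ideal (MvPolynomial (Fin 2) ℂ))
    (hI : I = Ideal.span {X 1 - C α * X 0, X 1 ^ 2 - C α * X 0 ^ 2}) :
    I = Ideal.span {X 1 - C α * X 0, X 0 ^ 2} ∧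
    ¬ ∃ S : Finset (MvPolynomial (Fin 2) ℂ),
        (∀ g ∈ S, IsProdMonBin g) ∧ I = Ideal.span (S : Set (MvPolynomial (Fin 2) ℂ)) := by
  have hα1 : α ≠ 1 := by simpa using hαru 1 one_pos
  have hd : α ^ 2 - α ≠ 0 := by
    intro h
    have : α * (α - 1) = 0 := by linear_combination h
    rcases mul_eq_zero.1 this with h' | h'
    · exact hα0 h'
    · exact hα1 (by linear_combination h')
  have hC1 : (C ((α^2-α)⁻¹) : MvPolynomial (Fin 2) ℂ) * (C α * C α - C α) = 1 := by
    rw [← C_mul, ← C_sub, ← C_mul, ← C_1]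
    congr 1
    field_simp
  have part1 : I = Ideal.span {X 1 - C α * X 0, X 0 ^ 2} := by
    rw [hI]
    apply le_antisymm <;> rw [Ideal.span_le] <;> rintro p hp <;>
      simp only [Set.mem_insert_iff, Set.mem_singleton_iff] at hp <;>
      rcases hp with rfl | rfl
    · exact Ideal.subset_span (Set.mem_insert _ _)
    · rw [SetLike.mem_coe, Ideal.mem_span_pair]
      exact ⟨X 1 + C α * X 0, C α * C α - C α, by ring⟩
    · exact Ideal.subset_span (Set.mem_insert _ _)
    · rw [SetLike.mem_coe, Ideal.mem_span_pair]
      refine ⟨-(C ((α^2-α)⁻¹) * (X 1 + C α * X 0)), C ((α^2-α)⁻¹), ?_⟩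
      linear_combination (X 0 : MvPolynomial (Fin 2) ℂ) ^ 2 * hC1
  refine ⟨part1, ?_⟩
  rintro ⟨S, hS, hspan⟩
  have hPhiyx : Phi (X 1 - C α * X 0) = inr (-α, 1) := by
    rw [map_sub, map_mul, Phi_X0, Phi_X1, algHom_C]
    ext <;> simp [algebraMap_eq_inl, inl_mul_inr]
  have key : ∀ g ∈ S, Phi g = 0 := by
    intro g hg
    have hgI : g ∈ Ideal.span {X 1 - C α * X 0, X 0 ^ 2} := by
      rw [← part1, hspan]
      exact Ideal.subset_span hg
    rw [Ideal.mem_span_pair] at hgI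
    obtain ⟨u, v, huv⟩ := hgI
    have hΦg : Phi g = Phi u * inr (-α, 1) := by
      rw [← huv, map_add, map_mul, map_mul, hPhiyx, map_pow, Phi_X0, inr_sq, mul_zero, add_zero]
    have hfst : (Phi g).fst = 0 := by rw [hΦg, fst_mul, fst_inr, mul_zero]
    have hsnd : (Phi g).snd = (Phi u).fst • ((-α : ℂ), (1:ℂ)) := by
      rw [hΦg, snd_mul', fst_inr, snd_inr, zero_smul, add_zero]
    have hgood := good_phi (hS g hg) hfst
    have hc : (Phi u).fst = 0 := by
      rcases hgood with h | h | h <;> rw [hsnd] at h <;>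
        simp only [Prod.smul_fst, Prod.smul_snd, smul_eq_mul] at h
      · rcases mul_eq_zero.1 h with h' | h'
        · exact h'
        · exact absurd (neg_eq_zero.1 h') hα0
      · simpa using h
      · have h2 : (Phi u).fst * (1 - α) = 0 := by linear_combination h
        rcases mul_eq_zero.1 h2 with h' | h'
        · exact h'
        · exact absurd (by linear_combination -h') hα1
    rw [hΦg]
    refine TrivSqZeroExt.ext ?_ ?_
    · rw [fst_mul, fst_inr, mul_zero, fst_zero]
    · rw [snd_mul', fst_inr, snd_inr, zero_smul, add_zero, hc, zero_smul, snd_zero]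
  have hmem : (X 1 - C α * X 0 : MvPolynomial (Fin 2) ℂ) ∈ I := by
    rw [part1]; exact Ideal.subset_span (Set.mem_insert _ _)
  have hker : Phi (X 1 - C α * X 0) = 0 := by
    have hle : I ≤ RingHom.ker Phi.toRingHom := by
      rw [hspan, Ideal.span_le]
      intro g hg
      exact key g hg
    exact hle hmem
  rw [hPhiyx] at hker
  have : ((-α : ℂ), (1:ℂ)) = 0 := by
    have := congrArg TrivSqZeroExt.snd hker
    simpa using this
  simp [Prod.ext_iff] at this
end

section
/- In ℂ[x,y], let α ≠ β be two nonzero complex numbers that are not roots of unity, I = (y−αx), J = (y−βx). Then I^{(*)} ∩ J^{(*)} = (x,y)², while x² ∉ (I∩J)^{(*)}; hence (I∩J)^{(*)} ≠ I^{(*)} ∩ J^{(*)}, so power-closure does not commute with intersection. -/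
open MvPolynomial

/-- An ideal is power-closed if it is closed under all the substitutions `x_j ↦ x_j^i`. -/
def PowerClosed {d : ℕ} (J : Ideal (MvPolynomial (Fin d) ℂ)) : Prop :=
  ∀ f ∈ J, ∀ i : ℕ, 0 < i → pw d i f ∈ J

/-- The power-closure of an ideal: the smallest power-closed ideal containing it. -/
noncomputable def powerClosure {d : ℕ} (I : Ideal (MvPolynomial (Fin d) ℂ)) :
    Ideal (MvPolynomial (Fin d) ℂ) :=
  sInf {J | PowerClosed J ∧ I ≤ J}



abbrev R2 := MvPolynomial (Fin 2) ℂ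

noncomputable def nn (a b : ℕ) : Fin 2 →₀ ℕ := Finsupp.single 0 a + Finsupp.single 1 b

lemma nn_apply0 (a b : ℕ) : nn a b 0 = a := by simp [nn, Finsupp.single_apply]
lemma nn_apply1 (a b : ℕ) : nn a b 1 = b := by simp [nn, Finsupp.single_apply]

lemma nn_eq_self (m : Fin 2 →₀ ℕ) : nn (m 0) (m 1) = m := by
  ext j; fin_cases j
  · exact nn_apply0 _ _
  · exact nn_apply1 _ _

lemma nn_inj {a b a' b' : ℕ} (h : nn a b = nn a' b') : a = a' ∧ b = b' := by
  constructor
  · have := congrArg (fun m : Fin 2 →₀ ℕ => m 0) h; simpa [nn_apply0] using this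
  · have := congrArg (fun m : Fin 2 →₀ ℕ => m 1) h; simpa [nn_apply1] using this

lemma monomial_nn (a b : ℕ) (c : ℂ) :
    (monomial (nn a b) c : R2) = C c * X 0 ^ a * X 1 ^ b := by
  rw [X_pow_eq_monomial, X_pow_eq_monomial, C_apply, monomial_mul, monomial_mul]
  simp [nn]

lemma smul_nn (i a b : ℕ) : i • nn a b = nn (i*a) (i*b) := by
  ext j; fin_cases j <;> simp [nn_apply0, nn_apply1]

lemma pw_monomial (i : ℕ) (m : Fin 2 →₀ ℕ) (c : ℂ) :
    pw 2 i (monomial m c) = monomial (i • m) c := by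
  rw [← nn_eq_self m, monomial_nn, smul_nn, monomial_nn]
  simp [pw, map_mul, ← pow_mul, mul_comm i]

lemma pw_one (f : R2) : pw 2 1 f = f := by simp [pw]

-- coeff of f * X 0
lemma cm0 (a b : ℕ) (f : R2) :
    coeff (nn (a+1) b) (f * X 0) = coeff (nn a b) f := by
  rw [coeff_mul_X']
  have h1 : (0 : Fin 2) ∈ (nn (a+1) b).support := by
    simp [Finsupp.mem_support_iff, nn_apply0]
  rw [if_pos h1]
  congr 1
  ext j; fin_cases j <;> simp [nn_apply0, nn_apply1, Finsupp.single_apply]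

lemma cm0' (b : ℕ) (f : R2) : coeff (nn 0 b) (f * X 0) = 0 := by
  rw [coeff_mul_X']
  have h1 : (0 : Fin 2) ∉ (nn 0 b).support := by
    simp [Finsupp.mem_support_iff, nn_apply0]
  rw [if_neg h1]

lemma cm1 (a b : ℕ) (f : R2) :
    coeff (nn a (b+1)) (f * X 1) = coeff (nn a b) f := by
  rw [coeff_mul_X']
  have h1 : (1 : Fin 2) ∈ (nn a (b+1)).support := by
    simp [Finsupp.mem_support_iff, nn_apply1]
  rw [if_pos h1]
  congr 1
  ext j; fin_cases j <;> simp [nn_apply0, nn_apply1, Finsupp.single_apply]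

lemma cm1' (a : ℕ) (f : R2) : coeff (nn a 0) (f * X 1) = 0 := by
  rw [coeff_mul_X']
  have h1 : (1 : Fin 2) ∉ (nn a 0).support := by
    simp [Finsupp.mem_support_iff, nn_apply1]
  rw [if_neg h1]

lemma cmc (n : Fin 2 →₀ ℕ) (c : ℂ) (f : R2) : coeff n (f * C c) = c * coeff n f := by
  rw [mul_comm, coeff_C_mul]

lemma pw_coeff_smul (i : ℕ) (hi : 0 < i) (f : R2) (m : Fin 2 →₀ ℕ) :
    coeff (i • m) (pw 2 i f) = coeff m f := by
  induction f using MvPolynomial.induction_on' with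
  | monomial u a =>
    rw [pw_monomial, coeff_monomial, coeff_monomial]
    by_cases h : u = m
    · simp [h]
    · rw [if_neg h, if_neg]
      intro he
      apply h
      ext j
      have := congrArg (fun g : Fin 2 →₀ ℕ => g j) he
      simp at this
      rcases this with h' | h'
      · exact h'
      · omega
  | add p q hp hq => simp only [pw, map_add, coeff_add] at *; rw [hp, hq]

lemma pw_coeff_zero (i : ℕ) (f : R2) (n : Fin 2 →₀ ℕ) (h : ∀ m, n ≠ i • m) :
    coeff n (pw 2 i f) = 0 := by
  induction f using MvPolynomial.induction_on' with
  | monomial u a =>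
    rw [pw_monomial, coeff_monomial, if_neg]
    exact fun he => h u he.symm
  | add p q hp hq =>
    simp only [pw, map_add, coeff_add] at *
    rw [hp, hq, add_zero]

/-- The ideal of polynomials all of whose terms have degree ≥ k. -/
noncomputable def LV (k : ℕ) : Ideal R2 where
  carrier := {f | ∀ n : Fin 2 →₀ ℕ, n 0 + n 1 < k → coeff n f = 0}
  zero_mem' := by intro n _; simp
  add_mem' := by intro p q hp hq n hn; rw [coeff_add, hp n hn, hq n hn, add_zero]
  smul_mem' := by
    intro g f hf n hn
    rw [smul_eq_mul, coeff_mul]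
    apply Finset.sum_eq_zero
    intro x hx
    rw [Finset.HasAntidiagonal.mem_antidiagonal] at hx
    have h2 : x.2 0 + x.2 1 < k := by
      have h0 : x.2 0 ≤ n 0 := by
        rw [← hx]; simp
      have h1 : x.2 1 ≤ n 1 := by
        rw [← hx]; simp
      omega
    rw [hf x.2 h2, mul_zero]

lemma mem_LV {k : ℕ} {f : R2} : f ∈ LV k ↔ ∀ n : Fin 2 →₀ ℕ, n 0 + n 1 < k → coeff n f = 0 :=
  Iff.rfl

lemma LV_mono {k k' : ℕ} (h : k ≤ k') : LV k' ≤ LV k := by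
  intro f hf n hn
  exact hf n (lt_of_lt_of_le hn h)

lemma LV_mul {j k : ℕ} : LV j * LV k ≤ LV (j + k) := by
  rw [Ideal.mul_le]
  intro r hr s hs n hn
  rw [coeff_mul]
  apply Finset.sum_eq_zero
  intro x hx
  rw [Finset.HasAntidiagonal.mem_antidiagonal] at hx
  have hsum : x.1 0 + x.1 1 + (x.2 0 + x.2 1) < j + k := by
    have e0 : x.1 0 + x.2 0 = n 0 := by rw [← hx]; simp
    have e1 : x.1 1 + x.2 1 = n 1 := by rw [← hx]; simp
    omega
  rcases lt_or_ge (x.1 0 + x.1 1) j with h | h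
  · rw [hr x.1 h, zero_mul]
  · rw [hs x.2 (by omega), mul_zero]

lemma pw_LV {k i : ℕ} (hi : 0 < i) {f : R2} (hf : f ∈ LV k) : pw 2 i f ∈ LV k := by
  intro n hn
  by_cases h : ∃ m, n = i • m
  · obtain ⟨m, rfl⟩ := h
    rw [pw_coeff_smul i hi]
    apply hf
    have h0 : (i • m) 0 = i * m 0 := by simp
    have h1 : (i • m) 1 = i * m 1 := by simp
    rw [h0, h1] at hn
    nlinarith [Nat.one_le_iff_ne_zero.mpr (Nat.pos_iff_ne_zero.mp hi)]
  · exact pw_coeff_zero i f n (by push_neg at h; exact h)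

lemma xy_mem_span : (X 0 : R2) ∈ Ideal.span {X 0, X 1} ∧ (X 1 : R2) ∈ Ideal.span {X 0, X 1} :=
  ⟨Ideal.subset_span (by simp), Ideal.subset_span (by simp)⟩

lemma pow_xy_mem {a b k : ℕ} (h : k ≤ a + b) :
    (X 0 ^ a * X 1 ^ b : R2) ∈ Ideal.span {X 0, X 1} ^ k := by
  have h1 : (X 0 ^ a * X 1 ^ b : R2) ∈ Ideal.span {X 0, X 1} ^ (a + b) := by
    rw [pow_add]
    exact Ideal.mul_mem_mul (Ideal.pow_mem_pow xy_mem_span.1 a) (Ideal.pow_mem_pow xy_mem_span.2 b)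
  exact Ideal.pow_le_pow_right h h1

lemma LV_le_span_pow (k : ℕ) : LV k ≤ Ideal.span {X 0, X 1} ^ k := by
  intro f hf
  rw [MvPolynomial.as_sum f]
  apply Ideal.sum_mem
  intro m hm
  rw [← nn_eq_self m, monomial_nn]
  have hk : k ≤ m 0 + m 1 := by
    by_contra hlt
    push_neg at hlt
    exact (MvPolynomial.mem_support_iff.mp hm) (hf m hlt)
  rw [mul_assoc]
  exact Ideal.mul_mem_left _ _ (pow_xy_mem hk)

lemma span_xy_le_LV1 : Ideal.span {(X 0 : R2), X 1} ≤ LV 1 := by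
  rw [Ideal.span_le]
  intro p hp
  simp only [Set.mem_insert_iff, Set.mem_singleton_iff] at hp
  rcases hp with rfl | rfl <;>
  · intro n hn
    have hn0 : n = 0 := by
      have h0 : n 0 = 0 := by omega
      have h1 : n 1 = 0 := by omega
      ext j; fin_cases j <;> simpa
    subst hn0
    simp [coeff_zero_X]

lemma span_pow_le_LV (k : ℕ) : Ideal.span {(X 0 : R2), X 1} ^ k ≤ LV k := by
  induction k with
  | zero => intro f _ n hn; omega
  | succ k ih =>
    calc Ideal.span {(X 0 : R2), X 1} ^ (k+1) = Ideal.span {(X 0 : R2), X 1} ^ k * Ideal.span {(X 0 : R2), X 1} := by rw [pow_succ]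
    _ ≤ LV k * LV 1 := Ideal.mul_mono ih span_xy_le_LV1
    _ ≤ LV (k+1) := LV_mul



lemma powerClosed_span {d : ℕ} (S : Set (MvPolynomial (Fin d) ℂ))
    (h : ∀ s ∈ S, ∀ i : ℕ, 0 < i → pw d i s ∈ Ideal.span S) : PowerClosed (Ideal.span S) := by
  intro f hf i hi
  have h1 : pw d i f ∈ Ideal.map (aeval (fun j => X j ^ i) : _ →ₐ[ℂ] _) (Ideal.span S) :=
    Ideal.mem_map_of_mem _ hf
  rw [Ideal.map_span] at h1
  refine Ideal.span_le.mpr ?_ h1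
  rintro _ ⟨s, hs, rfl⟩
  exact h s hs i hi

/-- linear generator -/
noncomputable def gl (γ : ℂ) : R2 := X 1 - C γ * X 0

/-- candidate power closure of (y - γ x) -/
noncomputable def Kcl (γ : ℂ) : Ideal R2 := Ideal.span {gl γ, X 0 ^ 2}

lemma ysq_mem (γ : ℂ) : (X 1 ^ 2 : R2) ∈ Kcl γ :=
  Ideal.mem_span_pair.mpr ⟨X 1 + C γ * X 0, C γ ^ 2, by unfold gl; ring⟩

lemma xsq_mem (γ : ℂ) : (X 0 ^ 2 : R2) ∈ Kcl γ :=
  Ideal.subset_span (by simp)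

lemma gl_mem (γ : ℂ) : gl γ ∈ Kcl γ := Ideal.subset_span (by simp)

lemma ypow_mem (γ : ℂ) {i : ℕ} (hi : 2 ≤ i) : (X 1 ^ i : R2) ∈ Kcl γ := by
  have : (X 1 ^ i : R2) = X 1 ^ (i - 2) * X 1 ^ 2 := by rw [← pow_add]; congr 1; omega
  rw [this]
  exact Ideal.mul_mem_left _ _ (ysq_mem γ)

lemma xpow_mem (γ : ℂ) {i : ℕ} (hi : 2 ≤ i) : (X 0 ^ i : R2) ∈ Kcl γ := by
  have : (X 0 ^ i : R2) = X 0 ^ (i - 2) * X 0 ^ 2 := by rw [← pow_add]; congr 1; omega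
  rw [this]
  exact Ideal.mul_mem_left _ _ (xsq_mem γ)

lemma pw_gl (γ : ℂ) (i : ℕ) : pw 2 i (gl γ) = X 1 ^ i - C γ * X 0 ^ i := by
  simp [pw, gl]

lemma pw_xsq (i : ℕ) : pw 2 i (X 0 ^ 2 : R2) = X 0 ^ (i * 2) := by
  simp [pw, ← pow_mul]

lemma Kcl_powerClosed (γ : ℂ) : PowerClosed (Kcl γ) := by
  apply powerClosed_span
  intro s hs i hi
  simp only [Set.mem_insert_iff, Set.mem_singleton_iff] at hs
  rcases hs with rfl | rfl
  · rw [pw_gl]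
    rcases Nat.lt_or_ge i 2 with h | h
    · interval_cases i
      · have hgm : gl γ ∈ Ideal.span {gl γ, X 0 ^ 2} := gl_mem γ
        simpa [gl] using hgm
    · exact sub_mem (ypow_mem γ h) (Ideal.mul_mem_left _ _ (xpow_mem γ h))
  · rw [pw_xsq]
    exact xpow_mem γ (by omega)

lemma powerClosure_eq_Kcl (γ : ℂ) (hγ0 : γ ≠ 0) (hγ1 : γ ≠ 1) :
    powerClosure (Ideal.span {gl γ}) = Kcl γ := by
  apply le_antisymm
  · apply sInf_le
    exact ⟨Kcl_powerClosed γ, Ideal.span_le.mpr (by simp [gl_mem γ])⟩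
  · apply le_sInf
    rintro J' ⟨hJ'pc, hJ'le⟩
    have hg : gl γ ∈ J' := hJ'le (Ideal.subset_span rfl)
    have h2 : pw 2 2 (gl γ) ∈ J' := hJ'pc _ hg 2 (by norm_num)
    rw [pw_gl] at h2
    have h3 : (X 1 + C γ * X 0) * gl γ ∈ J' := Ideal.mul_mem_left _ _ hg
    have h4 : C (γ^2 - γ) * X 0 ^ 2 ∈ J' := by
      have he : C (γ^2 - γ) * X 0 ^ 2 = (X 1 ^ 2 - C γ * X 0 ^ 2) - (X 1 + C γ * X 0) * gl γ := by
        unfold gl; rw [map_sub, map_pow]; ring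
      rw [he]
      exact sub_mem h2 h3
    have h5 : (X 0 ^ 2 : R2) ∈ J' := by
      have hne : γ^2 - γ ≠ 0 := by
        intro h
        exact hγ1 (mul_left_cancel₀ hγ0 (by linear_combination h : γ * γ = γ * 1))
      have : (X 0 ^ 2 : R2) = C (γ^2 - γ)⁻¹ * (C (γ^2 - γ) * X 0 ^ 2) := by
        rw [← mul_assoc, ← map_mul, inv_mul_cancel₀ hne, map_one, one_mul]
      rw [this]
      exact Ideal.mul_mem_left _ _ h4
    rw [Kcl, Ideal.span_le]
    rintro p hp
    simp only [Set.mem_insert_iff, Set.mem_singleton_iff] at hp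
    rcases hp with rfl | rfl
    · exact hg
    · exact h5

lemma xy_mem_Kcl (γ : ℂ) : (X 0 * X 1 : R2) ∈ Kcl γ :=
  Ideal.mem_span_pair.mpr ⟨X 0, C γ, by unfold gl; ring⟩

lemma span_pow_le_Kcl (γ : ℂ) : Ideal.span {(X 0 : R2), X 1} ^ 2 ≤ Kcl γ := by
  rw [sq, Ideal.mul_le]
  intro r hr s hs
  obtain ⟨a, b, hr⟩ := Ideal.mem_span_pair.mp hr
  obtain ⟨c, d, hs⟩ := Ideal.mem_span_pair.mp hs
  have he : r * s = (a*c) * X 0 ^ 2 + (a*d + b*c) * (X 0 * X 1) + (b*d) * X 1 ^ 2 := by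
    rw [← hr, ← hs]; ring
  rw [he]
  exact add_mem (add_mem (Ideal.mul_mem_left _ _ (xsq_mem γ))
    (Ideal.mul_mem_left _ _ (xy_mem_Kcl γ))) (Ideal.mul_mem_left _ _ (ysq_mem γ))

lemma Kcl_coeffs {γ : ℂ} {f : R2} (hf : f ∈ Kcl γ) :
    coeff (nn 0 0) f = 0 ∧ coeff (nn 1 0) f = -γ * coeff (nn 0 1) f := by
  obtain ⟨u, v, hf⟩ := Ideal.mem_span_pair.mp hf
  have he : u * gl γ + v * X 0 ^ 2 = u * X 1 - (u * C γ) * X 0 + ((v * X 0) * X 0) := by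
    unfold gl; ring
  rw [← hf, he]
  simp only [coeff_add, coeff_sub, cm1', cm0', cm0]
  constructor
  · ring
  · rw [cmc, show nn 0 1 = nn 0 (0+1) from rfl, cm1]
    ring

lemma Kcl_inf_eq {α β : ℂ} (hab : α ≠ β) :
    Kcl α ⊓ Kcl β = Ideal.span {(X 0 : R2), X 1} ^ 2 := by
  apply le_antisymm
  · intro f hf
    obtain ⟨hfα, hfβ⟩ := hf
    obtain ⟨h00, h10α⟩ := Kcl_coeffs hfα
    obtain ⟨_, h10β⟩ := Kcl_coeffs hfβ
    have h01 : coeff (nn 0 1) f = 0 := by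
      have h : (α - β) * coeff (nn 0 1) f = 0 := by linear_combination h10α - h10β
      rcases mul_eq_zero.mp h with h' | h'
      · exact absurd (sub_eq_zero.mp h') hab
      · exact h'
    have h10 : coeff (nn 1 0) f = 0 := by rw [h10α, h01, mul_zero]
    apply LV_le_span_pow 2
    intro n hn
    have hc : (n 0 = 0 ∧ n 1 = 0) ∨ (n 0 = 1 ∧ n 1 = 0) ∨ (n 0 = 0 ∧ n 1 = 1) := by omega
    rw [← nn_eq_self n]
    rcases hc with ⟨h0, h1⟩ | ⟨h0, h1⟩ | ⟨h0, h1⟩ <;> rw [h0, h1] <;> assumption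
  · exact le_inf (span_pow_le_Kcl α) (span_pow_le_Kcl β)

/-- The six low coefficients of `u * gl γ`. -/
lemma gl_mul_coeffs (γ : ℂ) (u : R2) :
    coeff (nn 0 0) (u * gl γ) = 0 ∧
    coeff (nn 1 0) (u * gl γ) = -γ * coeff (nn 0 0) u ∧
    coeff (nn 0 1) (u * gl γ) = coeff (nn 0 0) u ∧
    coeff (nn 2 0) (u * gl γ) = -γ * coeff (nn 1 0) u ∧
    coeff (nn 1 1) (u * gl γ) = coeff (nn 1 0) u - γ * coeff (nn 0 1) u ∧
    coeff (nn 0 2) (u * gl γ) = coeff (nn 0 1) u := by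
  have he : u * gl γ = u * X 1 - (u * C γ) * X 0 := by unfold gl; ring
  rw [he]
  simp only [coeff_sub]
  refine ⟨?_, ?_, ?_, ?_, ?_, ?_⟩
  · rw [cm1', cm0']; ring
  · rw [cm1', show nn 1 0 = nn (0+1) 0 from rfl, cm0, cmc]; ring
  · rw [show nn 0 1 = nn 0 (0+1) from rfl, cm1, cm0']; ring
  · rw [cm1', show nn 2 0 = nn (1+1) 0 from rfl, cm0, cmc]; ring
  · rw [show nn 1 1 = nn 1 (0+1) from rfl, cm1, show nn 1 (0+1) = nn (0+1) 1 from rfl, cm0, cmc]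
    try ring
  · rw [show nn 0 2 = nn 0 (1+1) from rfl, cm1, cm0']; ring

/-- The witness ideal showing `x² ∉ (I ⊓ J)^(*)`. -/
noncomputable def Wit (α β : ℂ) : Ideal R2 := Ideal.span {gl α * gl β} ⊔ LV 3

lemma glpow_LV {γ : ℂ} {i : ℕ} (hi : 2 ≤ i) : (X 1 ^ i - C γ * X 0 ^ i : R2) ∈ LV 2 := by
  intro n hn
  rw [coeff_sub, coeff_C_mul, coeff_X_pow, coeff_X_pow, if_neg, if_neg, mul_zero, sub_zero]
  · intro h
    have := congrArg (fun g : Fin 2 →₀ ℕ => g 0) h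
    simp [Finsupp.single_apply] at this
    omega
  · intro h
    have := congrArg (fun g : Fin 2 →₀ ℕ => g 1) h
    simp [Finsupp.single_apply] at this
    omega

lemma Wit_powerClosed (α β : ℂ) : PowerClosed (Wit α β) := by
  intro f hf i hi
  obtain ⟨a, ha, m, hm, rfl⟩ := Submodule.mem_sup.mp hf
  obtain ⟨u, rfl⟩ := Ideal.mem_span_singleton.mp ha
  have hq : pw 2 i (gl α * gl β) ∈ Wit α β := by
    rcases Nat.lt_or_ge i 2 with h | h
    · interval_cases i
      · rw [pw_one]
        exact Ideal.mem_sup_left (Ideal.subset_span rfl)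
    · have : pw 2 i (gl α * gl β) =
          (X 1 ^ i - C α * X 0 ^ i) * (X 1 ^ i - C β * X 0 ^ i) := by
        rw [pw, map_mul]
        rw [show (aeval fun j => X j ^ i) (gl α) = pw 2 i (gl α) from rfl,
            show (aeval fun j => X j ^ i) (gl β) = pw 2 i (gl β) from rfl, pw_gl, pw_gl]
      rw [this]
      exact Ideal.mem_sup_right
        (LV_mono (by norm_num : 3 ≤ 2 + 2) (LV_mul (Ideal.mul_mem_mul (glpow_LV h) (glpow_LV h))))
  have h1 : pw 2 i (gl α * gl β * u) ∈ Wit α β := by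
    rw [pw, map_mul]
    exact Ideal.mul_mem_right _ _ hq
  have h2 : pw 2 i m ∈ Wit α β := Ideal.mem_sup_right (pw_LV hi hm)
  rw [pw, map_add]
  exact add_mem h1 h2

lemma nn00_eq : nn 0 0 = 0 := by ext j; fin_cases j <;> simp [nn_apply0, nn_apply1]

lemma coeff_one_nn : coeff (nn 0 0) (1 : R2) = 1 ∧ coeff (nn 1 0) (1 : R2) = 0 ∧
    coeff (nn 0 1) (1 : R2) = 0 := by
  refine ⟨?_, ?_, ?_⟩ <;> rw [coeff_one]
  · rw [if_pos nn00_eq.symm]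
  · rw [if_neg]; intro h; have := congrArg (fun g : Fin 2 →₀ ℕ => g 0) h; simp [nn_apply0] at this
  · rw [if_neg]; intro h; have := congrArg (fun g : Fin 2 →₀ ℕ => g 1) h; simp [nn_apply1] at this

lemma gl_coeffs (γ : ℂ) : coeff (nn 0 0) (gl γ) = 0 ∧ coeff (nn 1 0) (gl γ) = -γ ∧
    coeff (nn 0 1) (gl γ) = 1 := by
  have h := gl_mul_coeffs γ 1
  rw [one_mul] at h
  obtain ⟨o1, o2, o3⟩ := coeff_one_nn
  exact ⟨h.1, by rw [h.2.1, o1, mul_one], by rw [h.2.2.1, o1]⟩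

lemma inf_le_Wit {α β : ℂ} (hab : α ≠ β) :
    Ideal.span {gl α} ⊓ Ideal.span {gl β} ≤ Wit α β := by
  intro f hf
  obtain ⟨hfα, hfβ⟩ := hf
  obtain ⟨u, hu⟩ := Ideal.mem_span_singleton.mp hfα
  obtain ⟨v, hv⟩ := Ideal.mem_span_singleton.mp hfβ
  have fu : f = u * gl α := by rw [hu]; ring
  have fv : f = v * gl β := by rw [hv]; ring
  obtain ⟨a1, a2, a3, a4, a5, a6⟩ := gl_mul_coeffs α u
  obtain ⟨b1, b2, b3, b4, b5, b6⟩ := gl_mul_coeffs β v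
  have e01 : coeff (nn 0 0) u = coeff (nn 0 0) v := by rw [← a3, ← b3, ← fu, ← fv]
  have e10 : -α * coeff (nn 0 0) u = -β * coeff (nn 0 0) v := by rw [← a2, ← b2, ← fu, ← fv]
  have hu00 : coeff (nn 0 0) u = 0 := by
    have h : (α - β) * coeff (nn 0 0) u = 0 := by linear_combination -e10 - β * e01
    rcases mul_eq_zero.mp h with h' | h'
    · exact absurd (sub_eq_zero.mp h') hab
    · exact h'
  have e02 : coeff (nn 0 1) u = coeff (nn 0 1) v := by rw [← a6, ← b6, ← fu, ← fv]
  have e20 : -α * coeff (nn 1 0) u = -β * coeff (nn 1 0) v := by rw [← a4, ← b4, ← fu, ← fv]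
  have e11 : coeff (nn 1 0) u - α * coeff (nn 0 1) u = coeff (nn 1 0) v - β * coeff (nn 0 1) v := by rw [← a5, ← b5, ← fu, ← fv]
  have hu10 : coeff (nn 1 0) u = -β * coeff (nn 0 1) u := by
    have h : (β - α) * (coeff (nn 1 0) u + β * coeff (nn 0 1) u) = 0 := by
      linear_combination β * e11 + β * β * e02 + e20
    rcases mul_eq_zero.mp h with h' | h'
    · exact absurd (sub_eq_zero.mp h').symm hab
    · linear_combination h'
  -- the remainder lies in LV 3
  set b := coeff (nn 0 1) u with hb
  set w : R2 := u - C b * gl β with hw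
  obtain ⟨g1, g2, g3⟩ := gl_coeffs β
  have w00 : coeff (nn 0 0) w = 0 := by
    rw [hw, coeff_sub, coeff_C_mul, g1, hu00]; ring
  have w10 : coeff (nn 1 0) w = 0 := by
    rw [hw, coeff_sub, coeff_C_mul, g2, hu10]; ring
  have w01 : coeff (nn 0 1) w = 0 := by
    rw [hw, coeff_sub, coeff_C_mul, g3]; ring
  have key : f - C b * (gl α * gl β) = w * gl α := by rw [fu, hw]; ring
  obtain ⟨c1, c2, c3, c4, c5, c6⟩ := gl_mul_coeffs α w
  apply Submodule.mem_sup.mpr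
  refine ⟨C b * (gl α * gl β), Ideal.mem_span_singleton.mpr ⟨C b, mul_comm _ _⟩,
    f - C b * (gl α * gl β), ?_, by ring⟩
  intro n hn
  have hc : (n 0 = 0 ∧ n 1 = 0) ∨ (n 0 = 1 ∧ n 1 = 0) ∨ (n 0 = 0 ∧ n 1 = 1) ∨
      (n 0 = 2 ∧ n 1 = 0) ∨ (n 0 = 1 ∧ n 1 = 1) ∨ (n 0 = 0 ∧ n 1 = 2) := by omega
  rw [← nn_eq_self n, key]
  rcases hc with ⟨h0, h1⟩ | ⟨h0, h1⟩ | ⟨h0, h1⟩ | ⟨h0, h1⟩ | ⟨h0, h1⟩ | ⟨h0, h1⟩ <;> rw [h0, h1]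
  · exact c1
  · rw [c2, w00]; ring
  · rw [c3, w00]
  · rw [c4, w10]; ring
  · rw [c5, w10, w01]; ring
  · rw [c6, w01]

lemma xsq_not_mem_Wit {α β : ℂ} : (X 0 ^ 2 : R2) ∉ Wit α β := by
  intro h
  obtain ⟨a, ha, m, hm, hadd⟩ := Submodule.mem_sup.mp h
  obtain ⟨u, rfl⟩ := Ideal.mem_span_singleton.mp ha
  set u' : R2 := u * gl β with hu'
  have hrep : gl α * gl β * u = u' * gl α := by rw [hu']; ring
  obtain ⟨c1, c2, c3, c4, c5, c6⟩ := gl_mul_coeffs α u'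
  obtain ⟨d1, d2, d3, d4, d5, d6⟩ := gl_mul_coeffs β u
  have hx20 : coeff (nn 2 0) (X 0 ^ 2 : R2) = 1 := by
    rw [coeff_X_pow, if_pos]
    ext j; fin_cases j <;> simp [nn_apply0, nn_apply1, Finsupp.single_apply]
  have hx02 : coeff (nn 0 2) (X 0 ^ 2 : R2) = 0 := by
    rw [coeff_X_pow, if_neg]
    intro hh; have := congrArg (fun g : Fin 2 →₀ ℕ => g 0) hh
    simp [nn_apply0, Finsupp.single_apply] at this
  have hm20 : coeff (nn 2 0) m = 0 := hm _ (by rw [nn_apply0, nn_apply1]; norm_num)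
  have hm02 : coeff (nn 0 2) m = 0 := hm _ (by rw [nn_apply0, nn_apply1]; norm_num)
  have e1 : (1 : ℂ) = α * β * coeff (nn 0 0) u := by
    have := congrArg (coeff (nn 2 0)) hadd
    rw [coeff_add, hrep, c4, hm20, hx20, hu', d2] at this
    linear_combination -this
  have e2 : (0 : ℂ) = coeff (nn 0 0) u := by
    have := congrArg (coeff (nn 0 2)) hadd
    rw [coeff_add, hrep, c6, hm02, hx02, hu', d3] at this
    linear_combination -this
  rw [← e2] at e1
  simp at e1

theorem stmt8 (α β : ℂ) (hα0 : α ≠ 0) (hβ0 : β ≠ 0) (hne : α ≠ β)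
    (hαru : ∀ n : ℕ, 0 < n → α ^ n ≠ 1) (hβru : ∀ n : ℕ, 0 < n → β ^ n ≠ 1)
    (I J : Ideal (MvPolynomial (Fin 2) ℂ))
    (hI : I = Ideal.span {X 1 - C α * X 0}) (hJ : J = Ideal.span {X 1 - C β * X 0}) :
    powerClosure I ⊓ powerClosure J = Ideal.span {X 0, X 1} ^ 2 ∧
    X 0 ^ 2 ∉ powerClosure (I ⊓ J) ∧
    powerClosure (I ⊓ J) ≠ powerClosure I ⊓ powerClosure J := by
  have hα1 : α ≠ 1 := fun h => hαru 1 one_pos (by rw [pow_one]; exact h)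
  have hβ1 : β ≠ 1 := fun h => hβru 1 one_pos (by rw [pow_one]; exact h)
  have hIg : I = Ideal.span {gl α} := hI
  have hJg : J = Ideal.span {gl β} := hJ
  have hA : powerClosure I ⊓ powerClosure J = Ideal.span {(X 0 : R2), X 1} ^ 2 := by
    rw [hIg, hJg, powerClosure_eq_Kcl α hα0 hα1, powerClosure_eq_Kcl β hβ0 hβ1,
      Kcl_inf_eq hne]
  have hB : (X 0 ^ 2 : R2) ∉ powerClosure (I ⊓ J) := by
    intro h
    have hle : powerClosure (I ⊓ J) ≤ Wit α β :=
      sInf_le ⟨Wit_powerClosed α β, by rw [hIg, hJg]; exact inf_le_Wit hne⟩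
    exact xsq_not_mem_Wit (hle h)
  refine ⟨hA, hB, ?_⟩
  intro hEq
  apply hB
  rw [hEq, hA]
  exact Ideal.pow_mem_pow xy_mem_span.1 2
end

section
/- A polynomial f ∈ ℂ[x] is powered (f divides f(x^i) for every i ∈ ℕ) if and only if f divides f(x^p) for every prime number p. -/
open Polynomial

theorem Polynomial.dvd_comp_X_pow_mul {R : Type*} [CommSemiring R] {f : R[X]} {m n : ℕ}
    (hm : f ∣ f.comp (X ^ m)) (hn : f ∣ f.comp (X ^ n)) : f ∣ f.comp (X ^ (m * n)) := by
  have hcomp : f.comp (X ^ (m * n)) = (f.comp (X ^ m)).comp (X ^ n) := by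
    rw [comp_assoc, X_pow_comp, ← pow_mul, mul_comm]
  rw [hcomp]
  exact hn.trans (_root_.map_dvd (compRingHom (X ^ n)) hm)

theorem stmt9 (f : Polynomial ℂ) :
    (∀ i : ℕ, 0 < i → f ∣ f.comp (Polynomial.X ^ i)) ↔
      (∀ p : ℕ, p.Prime → f ∣ f.comp (Polynomial.X ^ p)) := by
  refine ⟨fun h p hp => h p hp.pos, fun h i => ?_⟩
  induction i using Nat.recOnMul with
  | zero => exact fun h0 => absurd h0 (lt_irrefl 0)
  | one => simp
  | prime p hp => exact fun _ => h p hp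
  | mul a b ha hb =>
    intro hab
    exact dvd_comp_X_pow_mul (ha (Nat.pos_of_mul_pos_right hab)) (hb (Nat.pos_of_mul_pos_left hab))
end

section
/- Let a, b be relatively prime positive integers and f(x) = (x^a − 1)(x^b − 1)/(x − 1) ∈ ℂ[x]. Then f is a power-polynomial: f(x) divides f(x^n) in ℂ[x] for every positive integer n. -/
/-!
Write `Gₖ = 1 + X + ⋯ + X^(k-1)`, so that `(X - 1) Gₖ = X^k - 1` and `f = (X - 1) G_a G_b`.
Since `X^a - 1` divides `X^(an) - 1`, the factor `(X - 1) G_a` of `f` divides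
`f(X^n) = (X^(an) - 1) G_b(X^n)`, and likewise `(X - 1) G_b` does. As `a` and `b` are coprime,
`G_a` and `G_b` have no common root (a common root `z` has `z^a = z^b = 1`, so `z = 1`,
where they take the values `a` and `b`), hence they are coprime and the two divisibilities
combine to `f ∣ f(X^n)`.
-/

open Polynomial Finset

theorem mul_mul_dvd_of_isCoprime {R : Type*} [CommRing R] {u v w g : R} (h : IsCoprime v w)
    (hv : u * v ∣ g) (hw : u * w ∣ g) : u * v * w ∣ g := by
  obtain ⟨s, t, hst⟩ := h
  have hvg : u * v * w ∣ v * g := by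
    rw [mul_comm u v, mul_assoc]
    exact mul_dvd_mul_left v hw
  have hwg : u * v * w ∣ w * g := by
    rw [mul_comm _ w]
    exact mul_dvd_mul_left w hv
  rw [← one_mul g, ← hst, add_mul, mul_assoc s, mul_assoc t]
  exact dvd_add (hvg.mul_left s) (hwg.mul_left t)

namespace Polynomial

variable {R : Type*} [CommRing R]

theorem X_pow_sub_one_dvd_comp_X_pow (k n : ℕ) :
    X ^ k - 1 ∣ ((X : R[X]) ^ k - 1).comp (X ^ n) := by
  rw [sub_comp, pow_comp, X_comp, one_comp, ← pow_mul, mul_comm, pow_mul]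
  exact sub_one_dvd_pow_sub_one _ _

theorem mul_geom_sum_dvd_comp_X_pow (a b n : ℕ) :
    (X - 1 : R[X]) * ∑ i ∈ range a, X ^ i ∣
      ((X - 1 : R[X]) * (∑ i ∈ range a, X ^ i) * ∑ i ∈ range b, X ^ i).comp (X ^ n) := by
  rw [mul_comp, mul_geom_sum]
  exact dvd_mul_of_dvd_left (X_pow_sub_one_dvd_comp_X_pow a n) _

theorem dvd_comp_X_pow_of_isCoprime_geom_sum {a b : ℕ}
    (h : IsCoprime (∑ i ∈ range a, (X : R[X]) ^ i) (∑ i ∈ range b, X ^ i)) (n : ℕ) :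
    (X - 1 : R[X]) * (∑ i ∈ range a, X ^ i) * ∑ i ∈ range b, X ^ i ∣
      ((X - 1 : R[X]) * (∑ i ∈ range a, X ^ i) * ∑ i ∈ range b, X ^ i).comp (X ^ n) := by
  refine mul_mul_dvd_of_isCoprime h (mul_geom_sum_dvd_comp_X_pow a b n) ?_
  rw [mul_right_comm]
  exact mul_geom_sum_dvd_comp_X_pow b a n

theorem isCoprime_geom_sum_of_coprime {K : Type*} [Field K] {a b : ℕ} (hab : a.Coprime b) :
    IsCoprime (∑ i ∈ range a, (X : K[X]) ^ i) (∑ i ∈ range b, X ^ i) := by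
  rw [isCoprime_iff_aeval_ne_zero_of_isAlgClosed K (AlgebraicClosure K)]
  intro z
  by_contra! hz
  simp only [map_sum, map_pow, aeval_X] at hz
  have hza : z ^ a = 1 := by rw [← sub_eq_zero, ← mul_geom_sum, hz.1, mul_zero]
  have hzb : z ^ b = 1 := by rw [← sub_eq_zero, ← mul_geom_sum, hz.2, mul_zero]
  obtain rfl : z = 1 := (pow_eq_one_iff_of_coprime hab).mp ⟨hza, hzb⟩
  simp only [one_pow, sum_const, card_range, nsmul_one] at hz
  have hcast : IsCoprime (a : AlgebraicClosure K) b := by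
    simpa using (Nat.isCoprime_iff_coprime.mpr hab).map (Int.castRingHom (AlgebraicClosure K))
  exact hcast.ne_zero_or_ne_zero.elim (· hz.1) (· hz.2)

end Polynomial

theorem stmt10_general (a b : ℕ) (hab : Nat.Coprime a b)
    (f : Polynomial ℂ)
    (hf : (Polynomial.X - 1) * f = (Polynomial.X ^ a - 1) * (Polynomial.X ^ b - 1)) :
    ∀ n : ℕ, 0 < n → f ∣ f.comp (Polynomial.X ^ n) := by
  intro n _
  obtain rfl : f = (X - 1) * (∑ i ∈ range a, X ^ i) * ∑ i ∈ range b, X ^ i := by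
    refine mul_left_cancel₀ (show (X - 1 : ℂ[X]) ≠ 0 from X_sub_C_ne_zero 1) ?_
    rw [hf, ← mul_geom_sum, ← mul_geom_sum]
    ring
  exact dvd_comp_X_pow_of_isCoprime_geom_sum (isCoprime_geom_sum_of_coprime hab) n

theorem stmt10 (a b : ℕ) (ha : 0 < a) (hb : 0 < b) (hab : Nat.Coprime a b)
    (f : Polynomial ℂ)
    (hf : (Polynomial.X - 1) * f = (Polynomial.X ^ a - 1) * (Polynomial.X ^ b - 1)) :
    ∀ n : ℕ, 0 < n → f ∣ f.comp (Polynomial.X ^ n) :=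
  stmt10_general a b hab f hf
end

section
/- If f, g ∈ ℂ[x] are both powered, then lcm(f,g) is powered. -/
theorem lcm_dvd_map_lcm {α F : Type*} [CommMonoidWithZero α] [GCDMonoid α]
    [FunLike F α α] [MonoidHomClass F α α] (φ : F) {a b : α} (ha : a ∣ φ a) (hb : b ∣ φ b) :
    lcm a b ∣ φ (lcm a b) :=
  lcm_dvd (ha.trans (map_dvd φ (dvd_lcm_left a b))) (hb.trans (map_dvd φ (dvd_lcm_right a b)))

theorem stmt11 (f g : Polynomial ℂ)
    (hf : ∀ i : ℕ, 0 < i → f ∣ f.comp (Polynomial.X ^ i))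
    (hg : ∀ i : ℕ, 0 < i → g ∣ g.comp (Polynomial.X ^ i)) :
    ∀ i : ℕ, 0 < i → lcm f g ∣ (lcm f g).comp (Polynomial.X ^ i) :=
  fun i hi => lcm_dvd_map_lcm (Polynomial.compRingHom (Polynomial.X ^ i)) (hf i hi) (hg i hi)
end

section
/- For any f, g ∈ ℂ[x] and any i ∈ ℕ, one has gcd(f,g)(x^i) = gcd(f(x^i), g(x^i)) and lcm(f,g)(x^i) = lcm(f(x^i), g(x^i)) (up to units in ℂ[x]). -/
/-!
Substituting `x ^ i` is a ring endomorphism of `ℂ[x]`, and gcd and lcm commute up to units with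
any ring homomorphism out of a Bézout domain: the image of `gcd f g` divides both images, and the
image of a Bézout identity `gcd f g = f * a + g * b` shows that `gcd (φ f) (φ g)` divides it.
For the lcm, apply `φ` to `gcd f g * lcm f g ~ f * g` and cancel the gcd factor.
-/

open Polynomial

section MapGCD

variable {R S : Type*} [CommRing R] [IsDomain R] [IsBezout R] [GCDMonoid R]
  [CommRing S] [IsDomain S] [GCDMonoid S]

theorem associated_map_gcd (φ : R →+* S) (a b : R) :
    Associated (φ (gcd a b)) (gcd (φ a) (φ b)) := by
  refine associated_of_dvd_dvd
    (dvd_gcd (map_dvd φ (gcd_dvd_left a b)) (map_dvd φ (gcd_dvd_right a b))) ?_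
  obtain ⟨x, y, hxy⟩ := exists_gcd_eq_mul_add_mul a b
  rw [hxy, map_add, map_mul, map_mul]
  exact dvd_add ((gcd_dvd_left _ _).mul_right _) ((gcd_dvd_right _ _).mul_right _)

theorem associated_map_lcm (φ : R →+* S) (a b : R) :
    Associated (φ (lcm a b)) (lcm (φ a) (φ b)) := by
  by_cases hφa : φ a = 0
  · have hφlcm : φ (lcm a b) = 0 := zero_dvd_iff.mp (hφa ▸ map_dvd φ (dvd_lcm_left a b))
    rw [hφlcm, hφa, lcm_zero_left]
  have hgcd := associated_map_gcd φ a b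
  have hφgcd : φ (gcd a b) ≠ 0 := fun h ↦
    hφa ((gcd_eq_zero_iff _ _).mp (hgcd.eq_zero_iff.mp h)).1
  have hprod : Associated (φ (gcd a b) * φ (lcm a b)) (gcd (φ a) (φ b) * lcm (φ a) (φ b)) := by
    rw [← map_mul]
    exact ((gcd_mul_lcm a b).map φ).trans (by rw [map_mul]; exact (gcd_mul_lcm _ _).symm)
  exact hprod.of_mul_left hgcd hφgcd

end MapGCD

theorem stmt12_general (f g : Polynomial ℂ) (i : ℕ) :
    Associated ((gcd f g).comp (Polynomial.X ^ i))
      (gcd (f.comp (Polynomial.X ^ i)) (g.comp (Polynomial.X ^ i))) ∧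
    Associated ((lcm f g).comp (Polynomial.X ^ i))
      (lcm (f.comp (Polynomial.X ^ i)) (g.comp (Polynomial.X ^ i))) := by
  simpa only [coe_compRingHom_apply] using
    And.intro (associated_map_gcd (compRingHom (X ^ i)) f g)
      (associated_map_lcm (compRingHom (X ^ i)) f g)

theorem stmt12 (f g : Polynomial ℂ) (i : ℕ) (hi : 0 < i) :
    Associated ((gcd f g).comp (Polynomial.X ^ i))
      (gcd (f.comp (Polynomial.X ^ i)) (g.comp (Polynomial.X ^ i))) ∧
    Associated ((lcm f g).comp (Polynomial.X ^ i))
      (lcm (f.comp (Polynomial.X ^ i)) (g.comp (Polynomial.X ^ i))) :=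
  stmt12_general f g i
end

section
/- Every nonzero powered Laurent polynomial f ∈ ℂ[x]^± has all its roots equal to roots of unity; hence up to a unit f(x) = ∏_{i=1}^k (x−ρ_i)^{a_i} with the ρ_i distinct roots of unity. -/
open Polynomial

/- A nonzero Laurent polynomial over `ℂ` is, up to a unit of `ℂ[x]^±`, a polynomial
`p` with nonzero constant term; and for such `p`, being powered in the Laurent ring
is equivalent to `p ∣ p(x^i)` in `ℂ[x]` for all `i ≥ 1`. -/
theorem stmt14 (p : Polynomial ℂ) (hp : p ≠ 0) (h0 : p.eval 0 ≠ 0)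
    (hpow : ∀ i : ℕ, 0 < i → p ∣ p.comp (Polynomial.X ^ i)) :
    (∀ ρ : ℂ, p.IsRoot ρ → ∃ n : ℕ, 0 < n ∧ ρ ^ n = 1) ∧
    ∃ (c : ℂ) (k : ℕ) (ρ : Fin k → ℂ) (a : Fin k → ℕ),
      c ≠ 0 ∧ Function.Injective ρ ∧
      (∀ i, ∃ n : ℕ, 0 < n ∧ ρ i ^ n = 1) ∧ (∀ i, 0 < a i) ∧
      p = Polynomial.C c * ∏ i, (Polynomial.X - Polynomial.C (ρ i)) ^ a i := by
  have hρ0 : ∀ ρ : ℂ, p.IsRoot ρ → ρ ≠ 0 := by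
    rintro ρ hr rfl; exact h0 hr
  have hroots : ∀ ρ : ℂ, p.IsRoot ρ → ∃ n : ℕ, 0 < n ∧ ρ ^ n = 1 := by
    intro ρ hr
    have hpow' : ∀ i : ℕ, 0 < i → p.IsRoot (ρ ^ i) := by
      intro i hi
      obtain ⟨r, hrq⟩ := hpow i hi
      have h1 : (p.comp (X ^ i)).eval ρ = 0 := by
        rw [hrq, eval_mul, hr.eq_zero, zero_mul]
      simpa [eval_comp] using h1
    have key : ∀ m n : ℕ, m < n → ρ ^ (m + 1) = ρ ^ (n + 1) → ∃ d : ℕ, 0 < d ∧ ρ ^ d = 1 := by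
      intro m n hmn heq
      refine ⟨n - m, Nat.sub_pos_of_lt hmn, ?_⟩
      have hne : ρ ^ (m + 1) ≠ 0 := pow_ne_zero _ (hρ0 ρ hr)
      apply mul_left_cancel₀ hne
      rw [mul_one, ← pow_add]
      rw [heq]
      congr 1
      omega
    have hmem : ∀ n : ℕ, ρ ^ (n + 1) ∈ p.roots.toFinset := by
      intro n
      rw [Multiset.mem_toFinset, mem_roots hp]
      exact hpow' _ (Nat.succ_pos n)
    obtain ⟨m, n, hmn, heq⟩ :=
      Finite.exists_ne_map_eq_of_infinite
        (fun n : ℕ => (⟨ρ ^ (n + 1), hmem n⟩ : p.roots.toFinset))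
    have heq' : ρ ^ (m + 1) = ρ ^ (n + 1) := congrArg Subtype.val heq
    rcases hmn.lt_or_gt with h | h
    · exact key m n h heq'
    · exact key n m h heq'.symm
  refine ⟨hroots, ?_⟩
  set s := p.roots.toFinset with hs
  have hsplit : p = C p.leadingCoeff * (p.roots.map fun a => X - C a).prod :=
    (IsAlgClosed.splits p).eq_prod_roots
  have hcount : (p.roots.map fun a => X - C a).prod
      = ∏ m ∈ s, (X - C m) ^ p.roots.count m :=
    Finset.prod_multiset_map_count _ _
  refine ⟨p.leadingCoeff, s.card, fun i => (s.equivFin.symm i : ℂ),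
    fun i => p.roots.count ((s.equivFin.symm i : ℂ)),
    leadingCoeff_ne_zero.mpr hp,
    Subtype.val_injective.comp s.equivFin.symm.injective, ?_, ?_, ?_⟩
  · intro i
    exact hroots _ ((mem_roots hp).mp (Multiset.mem_toFinset.mp (s.equivFin.symm i).prop))
  · intro i
    exact Multiset.count_pos.mpr (Multiset.mem_toFinset.mp (s.equivFin.symm i).prop)
  · have hprod : (∏ m ∈ s, (X - C m) ^ p.roots.count m)
        = ∏ i : Fin s.card, (X - C ((s.equivFin.symm i : ℂ))) ^ p.roots.count ((s.equivFin.symm i : ℂ)) := by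
      rw [← Finset.prod_coe_sort s (fun m => (X - C m) ^ p.roots.count m)]
      exact (Equiv.prod_comp s.equivFin.symm
        (fun x : s => (X - C (x : ℂ)) ^ p.roots.count (x : ℂ))).symm
    conv_lhs => rw [hsplit, hcount, hprod]
end

section
/- A monic polynomial f ∈ ℂ[x] with f(0) ≠ 0 is powered if and only if f is a product of cyclotomic polynomials ∏_n φ_n^{a_n} such that whenever m divides n, the multiplicity a_m is at least a_n. In particular, any such f lies in ℤ[x] and all its irreducible factors over ℚ are cyclotomic. -/
open Polynomial

namespace Stmt15Aux

lemma count_map_ite (s : Multiset ℂ) (x : ℂ) :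
    (s.map fun r => if x = r then 1 else 0).sum = s.count x := by
  induction s using Multiset.induction_on with
  | empty => simp
  | cons a s ih =>
    simp only [Multiset.map_cons, Multiset.sum_cons, ih, Multiset.count_cons]
    rcases eq_or_ne x a with rfl | h
    · simp [add_comm]
    · simp [h, Ne.symm h]

lemma count_comp_roots (f : Polynomial ℂ) (hm : f.Monic)
    (hr0 : ∀ r ∈ f.roots, r ≠ 0) {i : ℕ} (hi : 0 < i) (β : ℂ) :
    (f.comp (X ^ i)).roots.count β = f.roots.count (β ^ i) := by
  classical
  have hsplit : f.Splits := IsAlgClosed.splits f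
  have hcomp : f.comp (X ^ i) = ((f.roots.map fun r => X ^ i - C r)).prod := by
    conv_lhs => rw [hsplit.eq_prod_roots_of_monic hm]
    rw [multiset_prod_comp, Multiset.map_map]
    congr 1
    apply Multiset.map_congr rfl
    intro r _
    simp
  rw [hcomp, roots_multiset_prod]
  · rw [Multiset.count_bind, Multiset.map_map]
    rw [← count_map_ite f.roots (β ^ i)]
    congr 1
    apply Multiset.map_congr rfl
    intro r hr
    have hrne : r ≠ 0 := hr0 r hr
    have hsep : ((X : Polynomial ℂ) ^ i - C r).Separable :=
      separable_X_pow_sub_C r (by exact_mod_cast hi.ne') hrne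
    have hnd : ((X : Polynomial ℂ) ^ i - C r).roots.Nodup := nodup_roots hsep
    have hne : ((X : Polynomial ℂ) ^ i - C r) ≠ 0 := X_pow_sub_C_ne_zero hi r
    have hmem : β ∈ ((X : Polynomial ℂ) ^ i - C r).roots ↔ β ^ i = r := by
      rw [mem_roots hne, IsRoot.def, eval_sub, eval_pow, eval_X, eval_C, sub_eq_zero]
    show ((X : Polynomial ℂ) ^ i - C r).roots.count β = _
    by_cases hb : β ^ i = r
    · rw [if_pos hb]
      exact Multiset.count_eq_one_of_mem hnd (hmem.mpr hb)
    · rw [if_neg hb, Multiset.count_eq_zero]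
      exact fun h => hb (hmem.mp h)
  · intro h
    obtain ⟨r, _, hr⟩ := Multiset.mem_map.mp h
    exact X_pow_sub_C_ne_zero hi r hr

lemma count_prod_roots (N : ℕ) (a : ℕ → ℕ) (β : ℂ) :
    (∏ n ∈ Finset.Icc 1 N, cyclotomic n ℂ ^ a n).roots.count β
      = ∑ n ∈ Finset.Icc 1 N, a n * (if β ∈ primitiveRoots n ℂ then 1 else 0) := by
  classical
  have h0 : (∏ n ∈ Finset.Icc 1 N, cyclotomic n ℂ ^ a n) ≠ 0 :=
    Finset.prod_ne_zero_iff.mpr fun n _ => pow_ne_zero _ (cyclotomic_ne_zero n ℂ)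
  rw [roots_prod _ _ h0, Multiset.count_bind, Finset.sum]
  apply congrArg
  apply Multiset.map_congr rfl
  intro n hn
  have hn1 : 1 ≤ n := (Finset.mem_Icc.mp hn).1
  haveI : NeZero ((n : ℂ)) := ⟨Nat.cast_ne_zero.mpr (by omega)⟩
  show ((cyclotomic n ℂ ^ a n).roots.count β) = _
  rw [roots_pow, Multiset.count_nsmul, cyclotomic.roots_eq_primitiveRoots_val]
  by_cases hb : β ∈ primitiveRoots n ℂ
  · rw [if_pos hb, Multiset.count_eq_one_of_mem (primitiveRoots n ℂ).nodup hb]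
  · rw [if_neg hb, Multiset.count_eq_zero_of_notMem hb, mul_zero]

end Stmt15Aux

open Stmt15Aux in
theorem stmt15 (f : Polynomial ℂ) (hm : f.Monic) (h0 : f.eval 0 ≠ 0) :
    ((∀ i : ℕ, 0 < i → f ∣ f.comp (Polynomial.X ^ i)) ↔
      ∃ (N : ℕ) (a : ℕ → ℕ),
        (∀ m n : ℕ, 0 < m → m ∣ n → a n ≤ a m) ∧
        f = ∏ n ∈ Finset.Icc 1 N, Polynomial.cyclotomic n ℂ ^ a n) ∧
    ((∀ i : ℕ, 0 < i → f ∣ f.comp (Polynomial.X ^ i)) →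
      ∃ g : Polynomial ℤ, f = g.map (Int.castRingHom ℂ)) := by
  classical
  have hfne : f ≠ 0 := hm.ne_zero
  have hsplit : f.Splits := IsAlgClosed.splits f
  have hr0 : ∀ r ∈ f.roots, r ≠ 0 := by
    intro r hr hr0
    subst hr0
    exact h0 ((mem_roots hfne).mp hr)
  have hcrit : ∀ i : ℕ, 0 < i →
      (f ∣ f.comp (X ^ i) ↔ ∀ β : ℂ, f.roots.count β ≤ f.roots.count (β ^ i)) := by
    intro i hi
    have hcm : (f.comp (X ^ i)).Monic := hm.comp (monic_X_pow i) (by simp [hi.ne'])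
    rw [Splits.dvd_iff_roots_le_roots hsplit hfne hcm.ne_zero, Multiset.le_iff_count]
    exact forall_congr' fun β => by rw [count_comp_roots f hm hr0 hi β]
  -- forward direction
  have hfwd : (∀ i : ℕ, 0 < i → f ∣ f.comp (X ^ i)) →
      ∃ (N : ℕ) (a : ℕ → ℕ),
        (∀ m n : ℕ, 0 < m → m ∣ n → a n ≤ a m) ∧
        f = ∏ n ∈ Finset.Icc 1 N, cyclotomic n ℂ ^ a n := by
    intro H'
    have H : ∀ i : ℕ, 0 < i → ∀ β : ℂ, f.roots.count β ≤ f.roots.count (β ^ i) :=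
      fun i hi => (hcrit i hi).mp (H' i hi)
    -- every root has finite order
    have hfin : ∀ β ∈ f.roots, IsOfFinOrder β := by
      intro β hβ
      have hβ0 : β ≠ 0 := hr0 β hβ
      have hpow : ∀ k : ℕ, β ^ (k + 1) ∈ f.roots.toFinset := by
        intro k
        rw [Multiset.mem_toFinset, ← Multiset.count_pos]
        calc 0 < f.roots.count β := Multiset.count_pos.mpr hβ
          _ ≤ f.roots.count (β ^ (k + 1)) := H (k + 1) k.succ_pos β
      obtain ⟨k, l, hkl, he⟩ := Finite.exists_ne_map_eq_of_infinite
        (fun k : ℕ => (⟨β ^ (k + 1), hpow k⟩ : f.roots.toFinset))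
      have he' : β ^ (k + 1) = β ^ (l + 1) := congrArg Subtype.val he
      have key : ∀ k l : ℕ, k < l → β ^ (k + 1) = β ^ (l + 1) → IsOfFinOrder β := by
        intro k l hkl he'
        have h1 : β ^ (k + 1) * β ^ (l - k) = β ^ (k + 1) * 1 := by
          rw [mul_one, ← pow_add]
          rw [he']
          congr 1
          omega
        have h2 : β ^ (l - k) = 1 := mul_left_cancel₀ (pow_ne_zero _ hβ0) h1
        exact isOfFinOrder_iff_pow_eq_one.mpr ⟨l - k, by omega, h2⟩
      rcases hkl.lt_or_gt with h | h
      · exact key k l h he'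
      · exact key l k h he'.symm
    -- the count is constant on primitive n-th roots
    have hconst : ∀ n : ℕ, 0 < n → ∀ β γ : ℂ, IsPrimitiveRoot β n → IsPrimitiveRoot γ n →
        f.roots.count β = f.roots.count γ := by
      have key : ∀ n : ℕ, 0 < n → ∀ β γ : ℂ, IsPrimitiveRoot β n → IsPrimitiveRoot γ n →
          f.roots.count β ≤ f.roots.count γ := by
        intro n hn β γ hβ hγ
        haveI : NeZero n := ⟨hn.ne'⟩
        obtain ⟨j, hj, hjγ⟩ := hβ.eq_pow_of_pow_eq_one hγ.pow_eq_one
        rcases Nat.eq_zero_or_pos j with rfl | hj0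
        · have hγβ : γ = β ^ n := by rw [hβ.pow_eq_one, ← hjγ, pow_zero]
          rw [hγβ]; exact H n hn β
        · rw [← hjγ]; exact H j hj0 β
      exact fun n hn β γ hβ hγ => le_antisymm (key n hn β γ hβ hγ) (key n hn γ β hγ hβ)
    set ζ : ℕ → ℂ := fun n => Complex.exp (2 * Real.pi * Complex.I / n) with hζdef
    have hζ : ∀ n : ℕ, n ≠ 0 → IsPrimitiveRoot (ζ n) n :=
      fun n hn => Complex.isPrimitiveRoot_exp n hn
    set N := f.roots.toFinset.sup orderOf with hNdef
    set a : ℕ → ℕ := fun n => if n = 0 then 0 else f.roots.count (ζ n) with hadef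
    have ha_count : ∀ n : ℕ, 0 < n → ∀ β : ℂ, IsPrimitiveRoot β n → f.roots.count β = a n := by
      intro n hn β hβ
      simp only [hadef, if_neg hn.ne']
      exact hconst n hn β (ζ n) hβ (hζ n hn.ne')
    have hmono : ∀ m n : ℕ, 0 < m → m ∣ n → a n ≤ a m := by
      intro m n hmp hmn
      rcases Nat.eq_zero_or_pos n with rfl | hn
      · simp [hadef]
      · obtain ⟨d, hd⟩ := hmn
        have hd0 : 0 < d := by
          rcases Nat.eq_zero_or_pos d with rfl | h
          · omega
          · exact h
        have hζn := hζ n hn.ne'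
        have hpow : IsPrimitiveRoot ((ζ n) ^ d) m := hζn.pow hn (by rw [hd, mul_comm])
        calc a n = f.roots.count (ζ n) := (ha_count n hn _ hζn).symm
          _ ≤ f.roots.count ((ζ n) ^ d) := H d hd0 _
          _ = a m := ha_count m hmp _ hpow
    refine ⟨N, a, hmono, ?_⟩
    have hrooteq : f.roots = (∏ n ∈ Finset.Icc 1 N, cyclotomic n ℂ ^ a n).roots := by
      rw [Multiset.ext]
      intro β
      rw [count_prod_roots N a β]
      by_cases hβ : β ∈ f.roots
      · have hfo := hfin β hβ
        have hn : 0 < orderOf β := orderOf_pos_iff.mpr hfo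
        have hprim : IsPrimitiveRoot β (orderOf β) := IsPrimitiveRoot.orderOf β
        have hnN : orderOf β ≤ N := Finset.le_sup (Multiset.mem_toFinset.mpr hβ)
        rw [Finset.sum_eq_single (orderOf β)]
        · rw [if_pos ((mem_primitiveRoots hn).mpr hprim), mul_one]
          exact ha_count _ hn β hprim
        · intro k hk hkn
          have hk1 : 0 < k := (Finset.mem_Icc.mp hk).1
          by_cases hmem : β ∈ primitiveRoots k ℂ
          · exact absurd (((mem_primitiveRoots hk1).mp hmem).unique hprim) hkn
          · rw [if_neg hmem, mul_zero]
        · intro hns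
          exact absurd (Finset.mem_Icc.mpr ⟨hn, hnN⟩) hns
      · rw [Multiset.count_eq_zero_of_notMem hβ]
        symm
        apply Finset.sum_eq_zero
        intro k hk
        have hk1 : 0 < k := (Finset.mem_Icc.mp hk).1
        by_cases hmem : β ∈ primitiveRoots k ℂ
        · rw [if_pos hmem, mul_one]
          rw [← ha_count k hk1 β ((mem_primitiveRoots hk1).mp hmem)]
          exact Multiset.count_eq_zero_of_notMem hβ
        · rw [if_neg hmem, mul_zero]
    have hPm : (∏ n ∈ Finset.Icc 1 N, cyclotomic n ℂ ^ a n).Monic :=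
      monic_prod_of_monic _ _ fun n _ => (cyclotomic.monic n ℂ).pow _
    rw [hsplit.eq_prod_roots_of_monic hm, hrooteq,
      ← (IsAlgClosed.splits _).eq_prod_roots_of_monic hPm]
  constructor
  · constructor
    · exact hfwd
    · rintro ⟨N, a, hmono, hfeq⟩ i hi
      rw [hcrit i hi]
      intro β
      rcases Nat.eq_zero_or_pos (f.roots.count β) with h0c | hposc
      · rw [h0c]; exact Nat.zero_le _
      · have hcount : ∀ γ : ℂ, f.roots.count γ
            = ∑ n ∈ Finset.Icc 1 N, a n * (if γ ∈ primitiveRoots n ℂ then 1 else 0) := by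
          intro γ
          conv_lhs => rw [hfeq]
          exact count_prod_roots N a γ
        have hex : ∃ n ∈ Finset.Icc 1 N,
            a n * (if β ∈ primitiveRoots n ℂ then 1 else 0) ≠ 0 := by
          by_contra hc
          push_neg at hc
          rw [hcount β, Finset.sum_eq_zero hc] at hposc
          exact absurd hposc (lt_irrefl 0)
        obtain ⟨n, hnI, hnz⟩ := hex
        have hmem : β ∈ primitiveRoots n ℂ := by
          by_contra h; simp [h] at hnz
        have hn1 : 0 < n := (Finset.mem_Icc.mp hnI).1
        have hnN : n ≤ N := (Finset.mem_Icc.mp hnI).2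
        have hprim : IsPrimitiveRoot β n := (mem_primitiveRoots hn1).mp hmem
        have hsingle : ∀ (γ : ℂ) (k : ℕ), 0 < k → k ≤ N → IsPrimitiveRoot γ k →
            f.roots.count γ = a k := by
          intro γ k hk hkN hγ
          rw [hcount γ, Finset.sum_eq_single k]
          · rw [if_pos ((mem_primitiveRoots hk).mpr hγ), mul_one]
          · intro b hb hbk
            by_cases hmem' : γ ∈ primitiveRoots b ℂ
            · exact absurd (((mem_primitiveRoots (Finset.mem_Icc.mp hb).1).mp hmem').unique hγ) hbk
            · rw [if_neg hmem', mul_zero]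
          · intro h; exact absurd (Finset.mem_Icc.mpr ⟨hk, hkN⟩) h
        have hfo : IsOfFinOrder β :=
          isOfFinOrder_iff_pow_eq_one.mpr ⟨n, hn1, hprim.pow_eq_one⟩
        have hfo' : IsOfFinOrder (β ^ i) := hfo.pow
        have hn' : 0 < orderOf (β ^ i) := orderOf_pos_iff.mpr hfo'
        have hprim' : IsPrimitiveRoot (β ^ i) (orderOf (β ^ i)) := IsPrimitiveRoot.orderOf _
        have hdvd : orderOf (β ^ i) ∣ n :=
          orderOf_dvd_of_pow_eq_one (by rw [← pow_mul, mul_comm, pow_mul, hprim.pow_eq_one, one_pow])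
        have hn'N : orderOf (β ^ i) ≤ N := le_trans (Nat.le_of_dvd hn1 hdvd) hnN
        rw [hsingle β n hn1 hnN hprim, hsingle (β ^ i) _ hn' hn'N hprim']
        exact hmono _ n hn' hdvd
  · intro H
    obtain ⟨N, a, -, hfeq⟩ := hfwd H
    refine ⟨∏ n ∈ Finset.Icc 1 N, cyclotomic n ℤ ^ a n, ?_⟩
    rw [hfeq, Polynomial.map_prod]
    refine Finset.prod_congr rfl fun n _ => ?_
    rw [Polynomial.map_pow, map_cyclotomic]
end

section
/- If ρ is a root of a powered polynomial f ∈ ℂ[x] with f(0) ≠ 0, then for every n ∈ ℕ, ρ^n is also a root of f and its multiplicity in f is at least the multiplicity of ρ in f. -/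
/-!
Substituting `X ^ n` into `f = (X - ρ ^ n) ^ k * q` with `q (ρ ^ n) ≠ 0` gives
`f (X ^ n) = (X ^ n - ρ ^ n) ^ k * q (X ^ n)`; since `X ^ n - ρ ^ n` is separable in characteristic
zero, `ρ` has multiplicity exactly `k` in `f (X ^ n)`. As `f ∣ f (X ^ n)`, the multiplicity of `ρ`
in `f` is at most `k`, the multiplicity of `ρ ^ n` in `f`, which is therefore positive.
-/

open Polynomial

namespace Polynomial

theorem rootMultiplicity_pow {R : Type*} [CommRing R] [IsDomain R] (p : R[X]) (k : ℕ) (x : R) :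
    (p ^ k).rootMultiplicity x = k * p.rootMultiplicity x := by
  classical
  rw [← count_roots, roots_pow, Multiset.count_nsmul, count_roots]

section Field

variable {F : Type*} [Field F] {n : ℕ} {ρ : F}

theorem rootMultiplicity_X_pow_sub_C_pow (hn : (n : F) ≠ 0) (hρ : ρ ≠ 0) :
    (X ^ n - C (ρ ^ n)).rootMultiplicity ρ = 1 := by
  have hsep := separable_X_pow_sub_C (ρ ^ n) hn (pow_ne_zero n hρ)
  refine le_antisymm (rootMultiplicity_le_one_of_separable hsep ρ) ?_
  exact (rootMultiplicity_pos hsep.ne_zero).2 (by simp)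

theorem rootMultiplicity_comp_X_pow {p : F[X]} (hp : p ≠ 0) (hn : (n : F) ≠ 0) (hρ : ρ ≠ 0) :
    (p.comp (X ^ n)).rootMultiplicity ρ = p.rootMultiplicity (ρ ^ n) := by
  have hq := eval_divByMonic_pow_rootMultiplicity_ne_zero (ρ ^ n) hp
  have hpq := pow_mul_divByMonic_rootMultiplicity_eq p (ρ ^ n)
  generalize p.rootMultiplicity (ρ ^ n) = k, p /ₘ _ = q at hq hpq
  have hqn : (q.comp (X ^ n)).eval ρ ≠ 0 := by simpa [eval_comp] using hq
  have hbase : X ^ n - C (ρ ^ n) ≠ 0 :=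
    (separable_X_pow_sub_C (ρ ^ n) hn (pow_ne_zero n hρ)).ne_zero
  have hcomp : p.comp (X ^ n) = (X ^ n - C (ρ ^ n)) ^ k * q.comp (X ^ n) := by
    rw [← hpq, mul_comp, pow_comp, sub_comp, X_comp, C_comp]
  have hne : (X ^ n - C (ρ ^ n)) ^ k * q.comp (X ^ n) ≠ 0 :=
    mul_ne_zero (pow_ne_zero k hbase) fun h => hqn (by simp [h])
  rw [hcomp, rootMultiplicity_mul hne, rootMultiplicity_pow, rootMultiplicity_X_pow_sub_C_pow hn hρ,
    rootMultiplicity_eq_zero hqn, mul_one, add_zero]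

end Field

end Polynomial

theorem stmt16 (f : Polynomial ℂ) (h0 : f.eval 0 ≠ 0)
    (hpow : ∀ i : ℕ, 0 < i → f ∣ f.comp (Polynomial.X ^ i))
    (ρ : ℂ) (hρ : f.IsRoot ρ) :
    ∀ n : ℕ, 0 < n →
      f.IsRoot (ρ ^ n) ∧
      Polynomial.rootMultiplicity ρ f ≤ Polynomial.rootMultiplicity (ρ ^ n) f := by
  intro n hn
  have hf : f ≠ 0 := by rintro rfl; simp at h0
  have hρ0 : ρ ≠ 0 := by rintro rfl; exact h0 hρ
  have hfn : f.comp (X ^ n) ≠ 0 := fun h =>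
    h0 (by simpa [eval_comp, hn.ne'] using congrArg (eval 0) h)
  have hle : f.rootMultiplicity ρ ≤ f.rootMultiplicity (ρ ^ n) := by
    rw [← rootMultiplicity_comp_X_pow hf (Nat.cast_ne_zero.2 hn.ne') hρ0]
    exact rootMultiplicity_le_rootMultiplicity_of_dvd hfn (hpow n hn) ρ
  have hpos : 0 < f.rootMultiplicity ρ := (rootMultiplicity_pos hf).2 hρ
  exact ⟨(rootMultiplicity_pos hf).1 (hpos.trans_le hle), hle⟩
end

section
/- A binomial b = x_1^{p_1}⋯x_h^{p_h} − y_1^{q_1}⋯y_k^{q_k} with all exponents positive and disjoint sets of variables is irreducible in ℂ[x_1,…,x_h,y_1,…,y_k] if and only if gcd(p_1,…,p_h,q_1,…,q_k) = 1. -/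
set_option maxHeartbeats 1000000
set_option synthInstance.maxHeartbeats 1000000


open Polynomial in
theorem aux_root {K : Type*} [Field K] [Algebra ℂ K] :
    ∀ ζ : K, ∀ d : ℕ, 0 < d → ζ ^ d = 1 → ∀ e : ℕ, 0 < e → ∃ μ : K, μ ^ e = ζ := by
  intro ζ d hd hζ e he
  obtain ⟨w, hw, hζw⟩ : ∃ w : ℂ, w ∈ nthRootsFinset d (1 : ℂ) ∧ algebraMap ℂ K w = ζ := by
    have hfac := Polynomial.X_pow_sub_one_eq_prod hd
      (Complex.isPrimitiveRoot_exp d hd.ne')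
    have h0 : (Polynomial.aeval ζ) ((X : ℂ[X]) ^ d - 1) = 0 := by
      simp [hζ]
    rw [hfac] at h0
    rw [map_prod] at h0
    obtain ⟨w, hw, hw0⟩ := Finset.prod_eq_zero_iff.mp h0
    refine ⟨w, hw, ?_⟩
    have h1 : ζ - algebraMap ℂ K w = 0 := by simpa using hw0
    exact (sub_eq_zero.mp h1).symm
  obtain ⟨z, hz⟩ := IsAlgClosed.exists_pow_nat_eq w he
  exact ⟨algebraMap ℂ K z, by rw [← map_pow, hz, hζw]⟩


open Polynomial IntermediateField AdjoinRoot Module in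
theorem aux_kummer {K : Type*} [Field K]
    (hroot : ∀ ζ : K, ∀ d : ℕ, 0 < d → ζ ^ d = 1 → ∀ e : ℕ, 0 < e → ∃ μ : K, μ ^ e = ζ)
    {n : ℕ} (hn : 0 < n) {a : K} (ha0 : a ≠ 0)
    (ha : ∀ P : ℕ, P.Prime → P ∣ n → ∀ b : K, b ^ P ≠ a) :
    Irreducible ((X : K[X]) ^ n - C a) := by
  rcases eq_or_lt_of_le (show 1 ≤ n from hn) with h1 | h1
  · rw [← h1, pow_one]
    exact irreducible_X_sub_C a
  have hnotunit : ¬ IsUnit ((X : K[X]) ^ n - C a) := by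
    rw [Polynomial.isUnit_iff_degree_eq_zero, degree_X_pow_sub_C hn, Nat.cast_eq_zero]
    omega
  have hne : ((X : K[X]) ^ n - C a) ≠ 0 := X_pow_sub_C_ne_zero hn a
  obtain ⟨g, hg, hg'⟩ := WfDvdMonoid.exists_irreducible_factor hnotunit hne
  suffices hdeg : g.natDegree = n by
    exact (associated_of_dvd_of_natDegree_le hg' hne
      (hdeg.trans natDegree_X_pow_sub_C.symm).ge).irreducible hg
  by_contra hcon
  have : Fact (Irreducible g) := ⟨hg⟩
  have key : (Algebra.norm K (AdjoinRoot.root g)) ^ n = a ^ g.natDegree := by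
    have := eval₂_eq_zero_of_dvd_of_eval₂_eq_zero _ _ hg' (AdjoinRoot.eval₂_root g)
    rw [eval₂_sub, eval₂_pow, eval₂_C, eval₂_X, sub_eq_zero] at this
    rw [← map_pow, this, ← AdjoinRoot.algebraMap_eq, Algebra.norm_algebraMap,
      ← finrank_top', ← IntermediateField.adjoin_root_eq_top g,
      IntermediateField.adjoin.finrank,
      AdjoinRoot.minpoly_root hg.ne_zero, natDegree_mul_C]
    · simpa using hg.ne_zero
    · exact AdjoinRoot.isIntegral_root hg.ne_zero
  set m := g.natDegree with hm
  have hm0 : 0 < m := natDegree_pos_iff_degree_pos.mpr (degree_pos_of_irreducible hg)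
  have hmn : m < n := lt_of_le_of_ne
    ((natDegree_le_of_dvd hg' hne).trans_eq natDegree_X_pow_sub_C) hcon
  set c : K := Algebra.norm K (AdjoinRoot.root g) with hc
  have hc0 : c ≠ 0 := by
    intro h
    rw [h, zero_pow hn.ne'] at key
    exact pow_ne_zero m ha0 key.symm
  -- units
  set A : Kˣ := Units.mk0 a ha0 with hA
  set Cu : Kˣ := Units.mk0 c hc0 with hCu
  have hk : Cu ^ n = A ^ m := by
    ext
    push_cast
    exact key
  set d := Nat.gcd m n with hd
  have hd0 : 0 < d := Nat.gcd_pos_of_pos_left _ hm0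
  have hdn : d ∣ n := Nat.gcd_dvd_right m n
  have hdm : d ≤ m := Nat.le_of_dvd hm0 (Nat.gcd_dvd_left m n)
  set x := Nat.gcdA m n with hx
  set y := Nat.gcdB m n with hy
  set E : Kˣ := Cu ^ x * A ^ y with hE
  have hk' : A ^ (m : ℤ) = Cu ^ (n : ℤ) := by
    rw [zpow_natCast, zpow_natCast, hk]
  have hEn : E ^ (n : ℤ) = A ^ (d : ℤ) := by
    have hb : (d : ℤ) = m * x + n * y := Nat.gcd_eq_gcd_ab m n
    rw [hE, hb, zpow_add, zpow_mul, zpow_mul, hk', mul_zpow, ← zpow_mul, ← zpow_mul,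
      mul_comm x (n : ℤ), mul_comm y (n : ℤ), zpow_mul, zpow_mul]
  obtain ⟨f, hf⟩ := hdn
  have hf1 : 1 < f := by
    rcases Nat.lt_or_ge f 2 with h | h
    · interval_cases f <;> omega
    · omega
  set ζ : Kˣ := A * (E ^ f)⁻¹ with hζ
  have h3 : (E ^ f) ^ (d : ℤ) = A ^ (d : ℤ) := by
    rw [← zpow_natCast E f, ← zpow_mul,
      show ((f : ℤ) * (d : ℤ)) = (n : ℤ) by exact_mod_cast (by rw [hf]; exact Nat.mul_comm f d : f * d = n), hEn]
  have hζd : (ζ : K) ^ d = 1 := by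
    have h4 : ζ ^ (d : ℤ) = 1 := by
      rw [hζ, mul_zpow, inv_zpow, h3]
      simp
    have h5 : ζ ^ d = 1 := by rw [← zpow_natCast ζ d]; exact h4
    simpa using congrArg Units.val h5
  obtain ⟨μ, hμ⟩ := hroot (ζ : K) d hd0 hζd f (by omega)
  obtain ⟨P, hP, hPf⟩ := Nat.exists_prime_and_dvd (by omega : f ≠ 1)
  obtain ⟨s, hs⟩ := hPf
  have hPn : P ∣ n := by
    rw [hf, hs]
    exact ⟨d * s, by ring⟩
  refine ha P hP hPn ((μ * (E : K)) ^ s) ?_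
  have hafe : a = (μ * (E : K)) ^ f := by
    have hunit : ζ * E ^ f = A := by rw [hζ]; group
    have h2 : (ζ : K) * ((E : K) ^ f) = a :=
      calc (ζ : K) * ((E : K) ^ f) = ((ζ * E ^ f : Kˣ) : K) := by push_cast; ring
      _ = a := by rw [hunit]; rfl
    rw [← h2, ← hμ, mul_pow]
  rw [← pow_mul, mul_comm s P, ← hs, ← hafe]


open MvPolynomial

/-- The isomorphism singling out one variable. -/
noncomputable def PsiAux (α : Type*) [DecidableEq α] (t : α) :
    MvPolynomial α ℂ ≃ₐ[ℂ] Polynomial (MvPolynomial {s : α // s ≠ t} ℂ) :=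
  (renameEquiv ℂ (Equiv.optionSubtypeNe t).symm).trans (optionEquivLeft ℂ _)

/-- Degree in the variable `t`. -/
noncomputable def Dg {α : Type*} [DecidableEq α] (t : α) (f : MvPolynomial α ℂ) : ℕ :=
  (PsiAux α t f).natDegree

theorem PsiAux_ne_zero {α : Type*} [DecidableEq α] (t : α) {f : MvPolynomial α ℂ}
    (hf : f ≠ 0) : PsiAux α t f ≠ 0 := by
  intro h
  apply hf
  have := congrArg (PsiAux α t).symm h
  simpa using this

theorem Dg_mul {α : Type*} [DecidableEq α] (t : α) {f g : MvPolynomial α ℂ}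
    (hf : f ≠ 0) (hg : g ≠ 0) : Dg t (f * g) = Dg t f + Dg t g := by
  unfold Dg
  rw [map_mul, Polynomial.natDegree_mul (PsiAux_ne_zero t hf) (PsiAux_ne_zero t hg)]

theorem Dg_one {α : Type*} [DecidableEq α] (t : α) : Dg t 1 = 0 := by
  unfold Dg; rw [map_one, Polynomial.natDegree_one]

theorem Dg_pow {α : Type*} [DecidableEq α] (t : α) {f : MvPolynomial α ℂ}
    (hf : f ≠ 0) (m : ℕ) : Dg t (f ^ m) = m * Dg t f := by
  induction m with
  | zero => simp [Dg_one]
  | succ m ih =>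
    rw [pow_succ, Dg_mul t (pow_ne_zero m hf) hf, ih]
    ring

theorem Dg_prod {α ι : Type*} [DecidableEq α] (t : α) (s : Finset ι)
    (g : ι → MvPolynomial α ℂ) (h : ∀ i ∈ s, g i ≠ 0) :
    Dg t (∏ i ∈ s, g i) = ∑ i ∈ s, Dg t (g i) := by
  classical
  induction s using Finset.induction_on with
  | empty => simp [Dg_one]
  | insert a s' hx ih =>
    rw [Finset.prod_insert hx, Finset.sum_insert hx,
      Dg_mul t (h a (Finset.mem_insert_self a s'))
        (Finset.prod_ne_zero_iff.mpr fun i hi => h i (Finset.mem_insert_of_mem hi)),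
      ih fun i hi => h i (Finset.mem_insert_of_mem hi)]

theorem Dg_X_self {α : Type*} [DecidableEq α] (t : α) : Dg t (X t : MvPolynomial α ℂ) = 1 := by
  unfold Dg PsiAux
  simp [Equiv.optionSubtypeNe_symm_self, optionEquivLeft_X_none]

theorem Dg_X_ne {α : Type*} [DecidableEq α] {t s : α} (h : s ≠ t) :
    Dg t (X s : MvPolynomial α ℂ) = 0 := by
  unfold Dg PsiAux
  simp [Equiv.optionSubtypeNe_symm_of_ne h, optionEquivLeft_X_some]

theorem prime_X_mv {α : Type*} [DecidableEq α] (t : α) :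
    Prime (X t : MvPolynomial α ℂ) := by
  rw [← MulEquiv.prime_iff (PsiAux α t).toMulEquiv]
  have : PsiAux α t (X t) = Polynomial.X := by
    unfold PsiAux
    simp [Equiv.optionSubtypeNe_symm_self, optionEquivLeft_X_none]
  rw [show (PsiAux α t).toMulEquiv (X t) = PsiAux α t (X t) from rfl, this]
  exact Polynomial.prime_X

theorem auxB {α : Type*} [DecidableEq α] {n : ℕ} (hn : 0 < n)
    {M N : MvPolynomial α ℂ} (hM : M ≠ 0) (hN : N ≠ 0)
    (hcop : ∀ r : MvPolynomial α ℂ, r ∣ M → r ∣ N → IsUnit r)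
    (hpow : ∀ P : ℕ, P.Prime → P ∣ n → ∀ u v : MvPolynomial α ℂ, v ≠ 0 →
      u ^ P * M ≠ v ^ P * N) :
    Irreducible (Polynomial.C M * Polynomial.X ^ n - Polynomial.C N) := by
  classical
  letI : NormalizationMonoid (MvPolynomial α ℂ) :=
    @StrongNormalizationMonoid.toNormalizationMonoid _ _ UniqueFactorizationMonoid.normalizationMonoid
  letI : NormalizedGCDMonoid (MvPolynomial α ℂ) :=
    UniqueFactorizationMonoid.toNormalizedGCDMonoid (MvPolynomial α ℂ)
  set K := FractionRing (MvPolynomial α ℂ)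
  letI : Algebra ℂ K :=
    ((algebraMap (MvPolynomial α ℂ) K).comp (algebraMap ℂ (MvPolynomial α ℂ))).toAlgebra
  set φ := algebraMap (MvPolynomial α ℂ) K with hφ
  have hinj : Function.Injective φ := IsFractionRing.injective _ _
  have hM' : φ M ≠ 0 := fun hc => hM (hinj (by simpa using hc))
  have hN' : φ N ≠ 0 := fun hc => hN (hinj (by simpa using hc))
  set f : Polynomial (MvPolynomial α ℂ) := Polynomial.C M * Polynomial.X ^ n - Polynomial.C N
    with hf
  have hprim : f.IsPrimitive := by
    intro r hr
    rw [Polynomial.C_dvd_iff_dvd_coeff] at hr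
    have h1 : r ∣ M := by
      have := hr n
      simpa [hf, Polynomial.coeff_C, hn.ne'] using this
    have h2 : r ∣ N := by
      have := hr 0
      rw [hf] at this
      simp only [Polynomial.coeff_sub, Polynomial.coeff_C_mul, Polynomial.coeff_X_pow,
        if_neg hn.ne, Polynomial.coeff_C, if_pos rfl, mul_zero, zero_sub, dvd_neg] at this
      exact this
    exact hcop r h1 h2
  rw [hf] at hprim ⊢
  rw [hprim.irreducible_iff_irreducible_map_fraction_map (K := K)]
  set a : K := φ N / φ M with ha
  have ha0 : a ≠ 0 := div_ne_zero hN' hM'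
  have hmapf : (Polynomial.C M * Polynomial.X ^ n - Polynomial.C N).map φ
      = Polynomial.C (φ M) * ((Polynomial.X : Polynomial K) ^ n - Polynomial.C a) := by
    rw [Polynomial.map_sub, Polynomial.map_mul, Polynomial.map_C, Polynomial.map_pow,
      Polynomial.map_X, Polynomial.map_C]
    have hCa : Polynomial.C (φ M) * Polynomial.C a = Polynomial.C (φ N) := by
      rw [← Polynomial.C_mul, mul_div_cancel₀ _ hM']
    rw [← hCa]; ring
  rw [hmapf, irreducible_isUnit_mul (Polynomial.isUnit_C.mpr (isUnit_iff_ne_zero.mpr hM'))]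
  apply aux_kummer aux_root hn ha0
  intro P hP hPn b hb
  obtain ⟨u, v, hv, rfl⟩ := IsFractionRing.div_surjective (A := MvPolynomial α ℂ) b
  have hv0 : v ≠ 0 := nonZeroDivisors.ne_zero hv
  have hv' : φ v ≠ 0 := fun hc => hv0 (hinj (by simpa using hc))
  rw [div_pow, ha, div_eq_div_iff (pow_ne_zero P hv') hM'] at hb
  apply hpow P hP hPn u v hv0
  apply hinj
  rw [map_mul, map_mul, map_pow, map_pow]
  rw [hb]
  ring
open MvPolynomial in
theorem stmt17 (h k : ℕ) (hh : 0 < h) (hk : 0 < k)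
    (p : Fin h → ℕ) (q : Fin k → ℕ) (hp : ∀ i, 0 < p i) (hq : ∀ j, 0 < q j) :
    Irreducible
      ((∏ i, X (Sum.inl i) ^ p i : MvPolynomial (Fin h ⊕ Fin k) ℂ) -
        ∏ j, X (Sum.inr j) ^ q j) ↔
      Nat.gcd (Finset.univ.gcd p) (Finset.univ.gcd q) = 1 := by
  classical
  constructor
  · -- Irreducible → gcd = 1
    intro hirr
    by_contra hgcd
    set d := Nat.gcd (Finset.univ.gcd p) (Finset.univ.gcd q) with hd
    have hdp : ∀ i, d ∣ p i := fun i =>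
      (Nat.gcd_dvd_left _ _).trans (Finset.gcd_dvd (Finset.mem_univ i))
    have hdq : ∀ j, d ∣ q j := fun j =>
      (Nat.gcd_dvd_right _ _).trans (Finset.gcd_dvd (Finset.mem_univ j))
    have hd0 : d ≠ 0 := by
      intro h0
      have hdvd := hdp ⟨0, hh⟩
      rw [h0] at hdvd
      exact (hp ⟨0, hh⟩).ne' (Nat.eq_zero_of_zero_dvd hdvd)
    have hd2 : 2 ≤ d := by
      rcases Nat.lt_or_ge d 2 with hlt | hge
      · interval_cases d <;> simp_all
      · exact hge
    set A : MvPolynomial (Fin h ⊕ Fin k) ℂ := ∏ i, X (Sum.inl i) ^ (p i / d) with hA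
    set B : MvPolynomial (Fin h ⊕ Fin k) ℂ := ∏ j, X (Sum.inr j) ^ (q j / d) with hB
    have hAd : A ^ d = ∏ i, X (Sum.inl i) ^ p i := by
      rw [hA, ← Finset.prod_pow]
      refine Finset.prod_congr rfl fun i _ => ?_
      rw [← pow_mul, Nat.div_mul_cancel (hdp i)]
    have hBd : B ^ d = ∏ j, X (Sum.inr j) ^ q j := by
      rw [hB, ← Finset.prod_pow]
      refine Finset.prod_congr rfl fun j _ => ?_
      rw [← pow_mul, Nat.div_mul_cancel (hdq j)]
    have hfact : (∏ i, X (Sum.inl i) ^ p i : MvPolynomial (Fin h ⊕ Fin k) ℂ)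
        - ∏ j, X (Sum.inr j) ^ q j
        = (∑ i ∈ Finset.range d, A ^ i * B ^ (d - 1 - i)) * (A - B) := by
      rw [← hAd, ← hBd, geom_sum₂_mul]
    rcases hirr.isUnit_or_isUnit hfact with hu | hu
    · obtain ⟨w, hw⟩ := IsAlgClosed.exists_pow_nat_eq
        (Complex.exp (2 * Real.pi * Complex.I / d)) (n := q ⟨0, hk⟩ / d)
        (Nat.div_pos (Nat.le_of_dvd (hq ⟨0, hk⟩) (hdq ⟨0, hk⟩)) (by omega))
      set ζ := Complex.exp (2 * Real.pi * Complex.I / d) with hζdef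
      have hζprim : IsPrimitiveRoot ζ d := Complex.isPrimitiveRoot_exp d hd0
      have hζ1 : ζ ≠ 1 := hζprim.ne_one (by omega)
      have hζd : ζ ^ d = 1 := hζprim.pow_eq_one
      set π : (Fin h ⊕ Fin k) → ℂ := Sum.elim (fun _ => 1)
        (fun j => if j = ⟨0, hk⟩ then w else 1) with hπ
      have hevalA : eval π A = 1 := by
        rw [hA, map_prod]
        refine Finset.prod_eq_one fun i _ => ?_
        rw [map_pow, eval_X]
        simp [hπ]
      have hevalB : eval π B = ζ := by
        rw [hB, map_prod]
        rw [Finset.prod_eq_single ⟨0, hk⟩ ?_ ?_]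
        · rw [map_pow, eval_X]
          simp [hπ, hw]
        · intro j _ hj
          rw [map_pow, eval_X]
          simp [hπ, hj]
        · intro hni
          exact absurd (Finset.mem_univ _) hni
      have hmap := hu.map (eval π)
      have heval0 : eval π (∑ i ∈ Finset.range d, A ^ i * B ^ (d - 1 - i)) = 0 := by
        rw [map_sum]
        simp only [map_mul, map_pow, hevalA, hevalB, one_pow, one_mul]
        rw [show (∑ i ∈ Finset.range d, ζ ^ (d - 1 - i)) = ∑ i ∈ Finset.range d, ζ ^ i from
          Finset.sum_range_reflect (fun i => ζ ^ i) d]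
        rw [geom_sum_eq hζ1, hζd, sub_self, zero_div]
      rw [heval0] at hmap
      exact not_isUnit_zero hmap
    · have hmap := hu.map (eval (fun _ => (1 : ℂ)))
      have h0 : eval (fun _ => (1 : ℂ)) (A - B) = 0 := by
        rw [map_sub, hA, hB, map_prod, map_prod]
        simp
      rw [h0] at hmap
      exact not_isUnit_zero hmap
  · -- gcd = 1 → irreducible
    intro hgcd
    set i0 : Fin h ⊕ Fin k := Sum.inl ⟨0, hh⟩ with hi0
    set Φ : MvPolynomial (Fin h ⊕ Fin k) ℂ ≃ₐ[ℂ]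
        Polynomial (MvPolynomial {s : Fin h ⊕ Fin k // s ≠ i0} ℂ) :=
      (renameEquiv ℂ (Equiv.optionSubtypeNe i0).symm).trans (optionEquivLeft ℂ _) with hΦ
    refine (MulEquiv.irreducible_iff Φ).mp ?_
    set ξ : (Fin h ⊕ Fin k) → MvPolynomial {s : Fin h ⊕ Fin k // s ≠ i0} ℂ :=
      fun s => if hs : s = i0 then 1 else X ⟨s, hs⟩ with hξ
    set M := ∏ i, (ξ (Sum.inl i)) ^ (p i) with hM
    set N := ∏ j, (ξ (Sum.inr j)) ^ (q j) with hN
    have hξ0 : ∀ s, ξ s ≠ 0 := by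
      intro s
      rw [hξ]
      dsimp only
      split
      · exact one_ne_zero
      · exact X_ne_zero _
    have hM0 : M ≠ 0 := by
      rw [hM]
      exact Finset.prod_ne_zero_iff.mpr fun i _ => pow_ne_zero _ (hξ0 _)
    have hN0 : N ≠ 0 := by
      rw [hN]
      exact Finset.prod_ne_zero_iff.mpr fun j _ => pow_ne_zero _ (hξ0 _)
    have hΦX : ∀ s, Φ (X s) = (if s = i0 then Polynomial.X else 1) * Polynomial.C (ξ s) := by
      intro s
      by_cases hs : s = i0
      · subst hs
        rw [hΦ]
        simp only [AlgEquiv.trans_apply, renameEquiv_apply, rename_X]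
        rw [Equiv.optionSubtypeNe_symm_self, optionEquivLeft_X_none]
        simp [hξ]
      · rw [hΦ]
        simp only [AlgEquiv.trans_apply, renameEquiv_apply, rename_X]
        rw [Equiv.optionSubtypeNe_symm_of_ne hs, optionEquivLeft_X_some]
        simp [hξ, hs]
    have hΦb : Φ ((∏ i, X (Sum.inl i) ^ p i : MvPolynomial (Fin h ⊕ Fin k) ℂ) -
        ∏ j, X (Sum.inr j) ^ q j)
        = Polynomial.C M * Polynomial.X ^ (p ⟨0, hh⟩) - Polynomial.C N := by
      rw [map_sub, map_prod, map_prod]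
      simp only [map_pow, hΦX, mul_pow]
      rw [Finset.prod_mul_distrib, Finset.prod_mul_distrib]
      have hL1 : (∏ i, (if Sum.inl i = i0 then (Polynomial.X :
          Polynomial (MvPolynomial {s : Fin h ⊕ Fin k // s ≠ i0} ℂ)) else 1) ^ (p i))
          = Polynomial.X ^ (p ⟨0, hh⟩) := by
        rw [Finset.prod_eq_single (⟨0, hh⟩ : Fin h)]
        · rw [if_pos (by rw [hi0])]
        · intro i _ hi
          rw [if_neg (fun hc => hi (Sum.inl.inj (hc.trans hi0))), one_pow]
        · intro hni
          exact absurd (Finset.mem_univ _) hni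
      have hL2 : (∏ i, (Polynomial.C (ξ (Sum.inl i))) ^ (p i)) = Polynomial.C M := by
        rw [hM]
        simp only [← map_pow]
        rw [← map_prod]
      have hR1 : (∏ j, (if Sum.inr j = i0 then (Polynomial.X :
          Polynomial (MvPolynomial {s : Fin h ⊕ Fin k // s ≠ i0} ℂ)) else 1) ^ (q j)) = 1 := by
        refine Finset.prod_eq_one fun j _ => ?_
        rw [if_neg (by rw [hi0]; exact fun hc => Sum.inr_ne_inl hc), one_pow]
      have hR2 : (∏ j, (Polynomial.C (ξ (Sum.inr j))) ^ (q j)) = Polynomial.C N := by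
        rw [hN]
        simp only [← map_pow]
        rw [← map_prod]
      rw [hL1, hL2, hR1, hR2, one_mul, mul_comm]
    rw [hΦb]
    -- now apply auxB
    have hDgξ : ∀ (t : {s : Fin h ⊕ Fin k // s ≠ i0}) (s : Fin h ⊕ Fin k),
        Dg t (ξ s) = if s = (t : Fin h ⊕ Fin k) then 1 else 0 := by
      intro t s
      rw [hξ]
      dsimp only
      by_cases hs : s = i0
      · rw [dif_pos hs, Dg_one, if_neg (fun hc => t.2 (hc.symm.trans hs))]
      · rw [dif_neg hs]
        by_cases hst : s = (t : Fin h ⊕ Fin k)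
        · rw [if_pos hst, show (⟨s, hs⟩ : {s : Fin h ⊕ Fin k // s ≠ i0}) = t from
            Subtype.ext hst, Dg_X_self]
        · rw [if_neg hst, Dg_X_ne (fun hc => hst (congrArg Subtype.val hc))]
    have hDgM : ∀ t : {s : Fin h ⊕ Fin k // s ≠ i0},
        Dg t M = ∑ i, p i * (if Sum.inl i = (t : Fin h ⊕ Fin k) then 1 else 0) := by
      intro t
      rw [hM, Dg_prod t _ _ (fun i _ => pow_ne_zero _ (hξ0 _))]
      refine Finset.sum_congr rfl fun i _ => ?_
      rw [Dg_pow t (hξ0 _), hDgξ]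
    have hDgN : ∀ t : {s : Fin h ⊕ Fin k // s ≠ i0},
        Dg t N = ∑ j, q j * (if Sum.inr j = (t : Fin h ⊕ Fin k) then 1 else 0) := by
      intro t
      rw [hN, Dg_prod t _ _ (fun j _ => pow_ne_zero _ (hξ0 _))]
      refine Finset.sum_congr rfl fun j _ => ?_
      rw [Dg_pow t (hξ0 _), hDgξ]
    apply auxB (hp ⟨0, hh⟩) hM0 hN0
    · -- coprimality
      intro r hrM hrN
      by_contra hr
      have hr0 : r ≠ 0 := by
        rintro rfl
        exact hM0 (zero_dvd_iff.mp hrM)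
      obtain ⟨w, hw, hwr⟩ := WfDvdMonoid.exists_irreducible_factor hr hr0
      have hwp : Prime w := UniqueFactorizationMonoid.irreducible_iff_prime.mp hw
      rw [hM] at hM0
      have hwM : w ∣ ∏ i, (ξ (Sum.inl i)) ^ (p i) := by
        rw [← hM]; exact hwr.trans hrM
      have hwN : w ∣ ∏ j, (ξ (Sum.inr j)) ^ (q j) := by
        rw [← hN]; exact hwr.trans hrN
      obtain ⟨i, -, hwi⟩ := (hwp.dvd_finset_prod_iff _).mp hwM
      obtain ⟨j, -, hwj⟩ := (hwp.dvd_finset_prod_iff _).mp hwN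
      have hwxi : w ∣ ξ (Sum.inl i) := hwp.dvd_of_dvd_pow hwi
      have hwxj : w ∣ ξ (Sum.inr j) := hwp.dvd_of_dvd_pow hwj
      by_cases hcase : Sum.inl i = i0
      · rw [hξ] at hwxi
        simp only [dif_pos hcase] at hwxi
        exact hw.not_isUnit (isUnit_of_dvd_one hwxi)
      · rw [hξ] at hwxi
        simp only [dif_neg hcase] at hwxi
        have hcase2 : Sum.inr j ≠ i0 := by
          rw [hi0]; exact fun hc => Sum.inr_ne_inl hc
        rw [hξ] at hwxj
        simp only [dif_neg hcase2] at hwxj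
        obtain ⟨c, hc⟩ := hwxi
        rcases (prime_X_mv (⟨Sum.inl i, hcase⟩ :
            {s : Fin h ⊕ Fin k // s ≠ i0})).irreducible.isUnit_or_isUnit hc with h1 | h1
        · exact hw.not_isUnit h1
        · obtain ⟨cu, rfl⟩ := h1
          have hXw : (X (⟨Sum.inl i, hcase⟩ : {s : Fin h ⊕ Fin k // s ≠ i0}) :
              MvPolynomial {s : Fin h ⊕ Fin k // s ≠ i0} ℂ) ∣ w :=
            ⟨(cu⁻¹ : _ˣ), by rw [hc, Units.mul_inv_cancel_right]⟩
          obtain ⟨c2, hc2⟩ := hXw.trans hwxj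
          have hne : (⟨Sum.inr j, hcase2⟩ : {s : Fin h ⊕ Fin k // s ≠ i0})
              ≠ ⟨Sum.inl i, hcase⟩ := fun hceq => Sum.inr_ne_inl (Subtype.ext_iff.mp hceq)
          have heq := congrArg
            (eval (fun s => if s = (⟨Sum.inl i, hcase⟩ : {s : Fin h ⊕ Fin k // s ≠ i0})
              then (0 : ℂ) else 1)) hc2
          rw [eval_X, eval_mul, eval_X, if_pos rfl, if_neg hne, zero_mul] at heq
          exact one_ne_zero heq
    · -- power condition
      intro P hP hPn u v hv huv
      have hu : u ≠ 0 := by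
        rintro rfl
        rw [zero_pow hP.ne_zero, zero_mul] at huv
        exact (mul_ne_zero (pow_ne_zero _ hv) hN0) huv.symm
      have hxi : ∀ i : Fin h, P ∣ p i := by
        intro i
        by_cases hieq : i = ⟨0, hh⟩
        · rw [hieq]; exact hPn
        · have ht : Sum.inl i ≠ i0 := by
            rw [hi0]; exact fun hc => hieq (Sum.inl.inj hc)
          set t : {s : Fin h ⊕ Fin k // s ≠ i0} := ⟨Sum.inl i, ht⟩ with hts
          have h1 := congrArg (Dg t) huv
          rw [Dg_mul t (pow_ne_zero _ hu) hM0, Dg_mul t (pow_ne_zero _ hv) hN0,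
            Dg_pow t hu, Dg_pow t hv, hDgM, hDgN] at h1
          rw [Finset.sum_eq_single i ?_ ?_] at h1
          rotate_left
          · intro i'' _ hne
            rw [if_neg (fun hc => hne (Sum.inl.inj (by rw [hts] at hc; exact hc))), mul_zero]
          · intro hni
            exact absurd (Finset.mem_univ _) hni
          rw [if_pos (by rw [hts]), mul_one] at h1
          rw [Finset.sum_eq_zero (fun j' _ => by
            rw [if_neg (by rw [hts]; exact fun hc => Sum.inr_ne_inl hc), mul_zero])] at h1
          have hz : (P : ℤ) * Dg t u + p i = P * Dg t v + 0 := by exact_mod_cast h1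
          have hzz : (p i : ℤ) = P * ((Dg t v : ℤ) - Dg t u) := by linear_combination hz
          exact Int.natCast_dvd_natCast.mp ⟨_, hzz⟩
      have hyj : ∀ j : Fin k, P ∣ q j := by
        intro j
        have ht : Sum.inr j ≠ i0 := by
          rw [hi0]; exact fun hc => Sum.inr_ne_inl hc
        set t : {s : Fin h ⊕ Fin k // s ≠ i0} := ⟨Sum.inr j, ht⟩ with hts
        have h1 := congrArg (Dg t) huv
        rw [Dg_mul t (pow_ne_zero _ hu) hM0, Dg_mul t (pow_ne_zero _ hv) hN0,
          Dg_pow t hu, Dg_pow t hv, hDgM, hDgN] at h1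
        rw [Finset.sum_eq_zero (fun i' _ => by
          rw [if_neg (by rw [hts]; exact fun hc => Sum.inl_ne_inr hc), mul_zero])] at h1
        rw [Finset.sum_eq_single j ?_ ?_] at h1
        rotate_left
        · intro j'' _ hne
          rw [if_neg (fun hc => hne (Sum.inr.inj (by rw [hts] at hc; exact hc))), mul_zero]
        · intro hni
          exact absurd (Finset.mem_univ _) hni
        rw [if_pos (by rw [hts]), mul_one] at h1
        have hz : (P : ℤ) * Dg t u + 0 = P * Dg t v + q j := by exact_mod_cast h1
        have hzz : (q j : ℤ) = P * ((Dg t u : ℤ) - Dg t v) := by linear_combination -hz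
        exact Int.natCast_dvd_natCast.mp ⟨_, hzz⟩
      have hPg : P ∣ Nat.gcd (Finset.univ.gcd p) (Finset.univ.gcd q) :=
        Nat.dvd_gcd (Finset.dvd_gcd fun i _ => hxi i) (Finset.dvd_gcd fun j _ => hyj j)
      rw [hgcd] at hPg
      exact hP.ne_one (Nat.dvd_one.mp hPg)
end

section
/- Let w ∈ ℂ^d and let I = {f ∈ ℂ[x_1,…,x_d] : f(w_1^j,…,w_d^j) = 0 for all j ∈ ℕ}. If f is a nonzero polynomial in I whose monomial support is minimal (no nonzero element of I has monomial support strictly contained in that of f), then f is a constant multiple of a monomial or of a binomial (difference of two monomials). -/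
/-!
Evaluating `f` at `w^(j)` gives the exponential sum `∑ₘ cₘ λₘ ^ j` with `λₘ = w^m`, so by
Vandermonde the coefficients of any `f ∈ I` sum to zero over each fibre `{m | λₘ = λ}` with
`λ ≠ 0`. Take `m` in the support of a minimal `f`. If `λₘ = 0`, the monomial `x^m` lies in `I`;
otherwise the fibre of `m` contains a second exponent `m'`, and `x^m - x^m'` lies in `I`. By
minimality `f` has the same support, and the fibre relation fixes its coefficients.
-/

open MvPolynomial

theorem Finset.mul_self_eq_zero_of_sum_mul_pow_eq_zero {R : Type*} [CommRing R] [IsDomain R]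
    {s : Finset R} {c : R → R} (h : ∀ j : ℕ, 0 < j → ∑ v ∈ s, c v * v ^ j = 0) :
    ∀ v ∈ s, c v * v = 0 := by
  let e := s.equivFin.symm
  have hvand : (fun i => c (e i) * e i) = 0 := by
    refine Matrix.eq_zero_of_forall_pow_sum_mul_pow_eq_zero (f := fun i => (e i : R))
      (fun a b hab => e.injective (Subtype.ext hab)) fun i => ?_
    calc ∑ k, c (e k) * e k * (e k : R) ^ (i : ℕ)
        = ∑ v ∈ s, c v * v ^ ((i : ℕ) + 1) := by
          rw [← Finset.sum_coe_sort s, ← e.sum_comp]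
          simp only [pow_succ, mul_assoc, mul_comm (_ ^ _)]
      _ = 0 := h _ i.succ_pos
  intro v hv
  simpa [e] using congrFun hvand (e.symm ⟨v, hv⟩)

namespace MvPolynomial

variable {σ R : Type*}

theorem eval_pow_monomial [CommSemiring R] (w : σ → R) (m : σ →₀ ℕ) (c : R) (j : ℕ) :
    eval (fun t => w t ^ j) (monomial m c) = c * eval w (monomial m 1) ^ j := by
  simp only [eval_monomial, Finsupp.prod, one_mul, ← Finset.prod_pow, ← pow_mul, mul_comm j]

theorem eval_pow_eq_sum [CommSemiring R] (w : σ → R) (f : MvPolynomial σ R) (j : ℕ) :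
    eval (fun t => w t ^ j) f = ∑ m ∈ f.support, coeff m f * eval w (monomial m 1) ^ j := by
  conv_lhs => rw [f.as_sum]
  simp only [map_sum, eval_pow_monomial]

def VanishesAtPowers [CommSemiring R] (w : σ → R) (f : MvPolynomial σ R) : Prop :=
  ∀ j : ℕ, 0 < j → eval (fun t => w t ^ j) f = 0

theorem VanishesAtPowers.sum_coeff_eq_zero [CommRing R] [IsDomain R] [DecidableEq R] {w : σ → R}
    {f : MvPolynomial σ R} (hf : VanishesAtPowers w f) {v : R} (hv : v ≠ 0) :
    ∑ m ∈ f.support with eval w (monomial m 1) = v, coeff m f = 0 := by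
  set Λ : (σ →₀ ℕ) → R := fun m => eval w (monomial m 1)
  -- `insert v` covers the case of an empty fibre over `v`.
  have hsum : ∀ j : ℕ, 0 < j → ∑ u ∈ insert v (f.support.image Λ),
      (∑ m ∈ f.support with Λ m = u, coeff m f) * u ^ j = 0 := by
    intro j hj
    calc ∑ u ∈ insert v (f.support.image Λ), (∑ m ∈ f.support with Λ m = u, coeff m f) * u ^ j
        = ∑ u ∈ insert v (f.support.image Λ), ∑ m ∈ f.support with Λ m = u,
            coeff m f * Λ m ^ j := by
          refine Finset.sum_congr rfl fun u _ => ?_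
          rw [Finset.sum_mul]
          exact Finset.sum_congr rfl fun m hm => by rw [(Finset.mem_filter.mp hm).2]
      _ = ∑ m ∈ f.support, coeff m f * Λ m ^ j := Finset.sum_fiberwise_of_maps_to
          (fun m hm => Finset.mem_insert_of_mem (Finset.mem_image_of_mem Λ hm)) _
      _ = 0 := (eval_pow_eq_sum w f j).symm.trans (hf j hj)
  exact (mul_eq_zero.mp (Finset.mul_self_eq_zero_of_sum_mul_pow_eq_zero hsum v
    (Finset.mem_insert_self _ _))).resolve_right hv

theorem eq_C_mul_monomial_of_minimal [CommSemiring R] [Nontrivial R] {w : σ → R}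
    {f : MvPolynomial σ R}
    (hmin : ∀ g, VanishesAtPowers w g → g ≠ 0 → ¬g.support ⊂ f.support)
    {m : σ →₀ ℕ} (hm : m ∈ f.support) (hwm : eval w (monomial m 1) = 0) :
    f = C (coeff m f) * monomial m 1 := by
  classical
  have hvanish : VanishesAtPowers w (monomial m (1 : R)) := fun j hj => by
    rw [eval_pow_monomial, hwm, zero_pow hj.ne', mul_zero]
  have hsupp : (monomial m (1 : R)).support = {m} := support_monomial.trans (if_neg one_ne_zero)
  have hsub : (monomial m (1 : R)).support ⊆ f.support := by
    rwa [hsupp, Finset.singleton_subset_iff]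
  have hfsupp : f.support = {m} := hsupp ▸
    (hsub.eq_or_ssubset.resolve_right (hmin _ hvanish (monomial_eq_zero.not.mpr one_ne_zero))).symm
  rw [C_mul_monomial, mul_one]
  conv_lhs => rw [f.as_sum, hfsupp, Finset.sum_singleton]

theorem exists_eq_C_mul_binomial_of_minimal [CommRing R] [IsDomain R] {w : σ → R}
    {f : MvPolynomial σ R} (hf : VanishesAtPowers w f)
    (hmin : ∀ g, VanishesAtPowers w g → g ≠ 0 → ¬g.support ⊂ f.support)
    {m : σ →₀ ℕ} (hm : m ∈ f.support) (hwm : eval w (monomial m 1) ≠ 0) :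
    ∃ m' ≠ m, f = C (coeff m f) * (monomial m 1 - monomial m' 1) := by
  classical
  have hfiber := hf.sum_coeff_eq_zero hwm
  obtain ⟨m', hm', hwm', hne⟩ :
      ∃ m' ∈ f.support, eval w (monomial m' 1) = eval w (monomial m 1) ∧ m' ≠ m := by
    by_contra! h
    refine mem_support_iff.mp hm ?_
    rwa [Finset.sum_eq_single_of_mem m ?_ ?_] at hfiber
    · exact Finset.mem_filter.mpr ⟨hm, rfl⟩
    intro m' hm' hne
    exact absurd (h m' (Finset.mem_filter.mp hm').1 (Finset.mem_filter.mp hm').2) hne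
  set g : MvPolynomial σ R := monomial m 1 - monomial m' 1
  have hvanish : VanishesAtPowers w g := fun j _ => by
    rw [map_sub, eval_pow_monomial, eval_pow_monomial]
    exact sub_eq_zero.mpr (congrArg (1 * · ^ j) hwm'.symm)
  have hg0 : g ≠ 0 := fun h => by
    simpa [g, coeff_monomial, hne] using congrArg (coeff m) h
  have hpair : {m, m'} ⊆ f.support := Finset.insert_subset hm (Finset.singleton_subset_iff.mpr hm')
  have hgsub : g.support ⊆ {m, m'} :=
    (support_sub _ _ _).trans (Finset.union_subset (support_monomial_subset.trans (by simp))
      (support_monomial_subset.trans (by simp)))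
  have hfsupp : f.support = {m, m'} := by
    refine Finset.Subset.antisymm ?_ hpair
    rw [← (hgsub.trans hpair).eq_or_ssubset.resolve_right (hmin g hvanish hg0)]
    exact hgsub
  have hcoeff : coeff m' f = -coeff m f := by
    rw [Finset.filter_true_of_mem fun m'' hm'' => ?_, hfsupp, Finset.sum_pair hne.symm] at hfiber
    · exact eq_neg_of_add_eq_zero_right hfiber
    · rcases Finset.mem_insert.mp (hfsupp ▸ hm'') with rfl | h
      · rfl
      · rw [Finset.mem_singleton.mp h, hwm']
  refine ⟨m', hne, ?_⟩
  conv_lhs => rw [f.as_sum, hfsupp, Finset.sum_pair hne.symm, hcoeff]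
  rw [mul_sub, C_mul_monomial, C_mul_monomial, mul_one, map_neg, sub_eq_add_neg]

end MvPolynomial

theorem stmt18 (d : ℕ) (w : Fin d → ℂ)
    (I : Set (MvPolynomial (Fin d) ℂ))
    (hI : I = {f | ∀ j : ℕ, 0 < j → eval (fun t => w t ^ j) f = 0})
    (f : MvPolynomial (Fin d) ℂ) (hf : f ∈ I) (hf0 : f ≠ 0)
    (hmin : ∀ g ∈ I, g ≠ 0 → ¬ g.support ⊂ f.support) :
    (∃ (c : ℂ) (m : Fin d →₀ ℕ), f = C c * monomial m 1) ∨
    (∃ (c : ℂ) (m₁ m₂ : Fin d →₀ ℕ), m₁ ≠ m₂ ∧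
      f = C c * (monomial m₁ 1 - monomial m₂ 1)) := by
  subst hI
  obtain ⟨m, hm⟩ := support_nonempty.mpr hf0
  by_cases hwm : eval w (monomial m 1) = 0
  · exact Or.inl ⟨_, m, eq_C_mul_monomial_of_minimal hmin hm hwm⟩
  · obtain ⟨m', hne, hf'⟩ := exists_eq_C_mul_binomial_of_minimal hf hmin hm hwm
    exact Or.inr ⟨_, m, m', hne.symm, hf'⟩
end

section
/- For any ideal I of R = ℂ[x_1,…,x_d], the radical √(I^{(*)}) is a power-closed ideal, and (√I)^{(*)} ⊆ √(I^{(*)}). Moreover, if I itself is power-closed then √I is power-closed and (√I)^{(*)} = √(I^{(*)}) = √I. -/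
open MvPolynomial

/-! The substitution `x_j ↦ x_j^i` is a ring endomorphism, so it commutes with powers and
radicals of power-closed ideals are power-closed. A power-closed ideal is its own
power-closure, so for power-closed `I` every term of the theorem collapses to `√I`. -/

section powerClosure

variable {d : ℕ} {I J : Ideal (MvPolynomial (Fin d) ℂ)}

theorem powerClosed_powerClosure (I : Ideal (MvPolynomial (Fin d) ℂ)) :
    PowerClosed (powerClosure I) := by
  intro f hf i hi
  rw [powerClosure, Ideal.mem_sInf] at hf ⊢
  exact fun J hJ => hJ.1 _ (hf hJ) i hi

theorem le_powerClosure (I : Ideal (MvPolynomial (Fin d) ℂ)) : I ≤ powerClosure I :=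
  le_sInf fun _ hJ => hJ.2

theorem powerClosure_le (hJ : PowerClosed J) (hIJ : I ≤ J) : powerClosure I ≤ J :=
  sInf_le ⟨hJ, hIJ⟩

end powerClosure

namespace PowerClosed

variable {d : ℕ} {I J : Ideal (MvPolynomial (Fin d) ℂ)}

theorem radical (hJ : PowerClosed J) : PowerClosed J.radical := by
  rintro f ⟨n, hn⟩ i hi
  exact ⟨n, by simpa only [pw, map_pow] using hJ _ hn i hi⟩

theorem powerClosure_eq (hI : PowerClosed I) : powerClosure I = I :=
  le_antisymm (powerClosure_le hI le_rfl) (le_powerClosure I)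

end PowerClosed

theorem stmt19 (d : ℕ) (I : Ideal (MvPolynomial (Fin d) ℂ)) :
    PowerClosed (powerClosure I).radical ∧
    powerClosure I.radical ≤ (powerClosure I).radical ∧
    (PowerClosed I →
      PowerClosed I.radical ∧
      powerClosure I.radical = (powerClosure I).radical ∧
      (powerClosure I).radical = I.radical) := by
  have hrad : PowerClosed (powerClosure I).radical := (powerClosed_powerClosure I).radical
  have hle : powerClosure I.radical ≤ (powerClosure I).radical :=
    powerClosure_le hrad (Ideal.radical_mono (le_powerClosure I))
  refine ⟨hrad, hle, fun hI => ⟨hI.radical, ?_, by rw [hI.powerClosure_eq]⟩⟩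
  rw [hI.powerClosure_eq, hI.radical.powerClosure_eq]
end
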